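/- arXiv:1711.08846 — 6 statements merged into one kernel-verified Lean document; each statement's English description precedes it below -/
import Mathlib

section
/- Let (X, d_X) be a compact metric space, A a unital C*-algebra, and ‖·‖_n a norm on A with constants M, N > 0 satisfying M‖·‖_n ≤ ‖·‖_A ≤ N‖·‖_n. Then the seminorms L^{(n),C(X)} and L^{(n),ℂ} are (N/M, 0)-quasi-Leibniz: for all self-adjoint a, b ∈ C(X,A) with L(a), L(b) < ∞, max{ L(a∘b), L({a,b}) } ≤ (N/M)·( ‖a‖_{C(X,A)} L(b) + ‖b‖_{C(X,A)} L(a) ), where L denotes L^{(n),C(X)} or L^{(n),ℂ} respectively. -/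
open scoped ENNReal

section Defs

variable {X : Type*} [MetricSpace X] [CompactSpace X]
variable {A : Type*} [NormedRing A] [StarRing A] [CStarRing A]
  [NormedAlgebra ℂ A] [StarModule ℂ A] [CompleteSpace A]

/-- `nn` is a norm on `A` over `ℝ` (in particular, any norm over `ℂ` qualifies). -/
def IsNormOn (A : Type*) [NormedRing A] [NormedAlgebra ℂ A] (nn : A → ℝ) : Prop :=
  (∀ x, 0 ≤ nn x) ∧ (∀ x, nn x = 0 ↔ x = 0) ∧
    (∀ x y, nn (x + y) ≤ nn x + nn y) ∧ ∀ (r : ℝ) (x : A), nn ((r : ℂ) • x) = |r| * nn x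

/-- The Lipschitz-type quantity `l^{(n)}_{d_X}` on `C(X, A)`, valued in `[0,∞]`. -/
noncomputable def lipn (nn : A → ℝ) (a : C(X, A)) : ℝ≥0∞ :=
  ⨆ (p : X × X) (_ : p.1 ≠ p.2),
    ENNReal.ofReal (nn (a p.1 - a p.2) / dist p.1 p.2)

/-- The quotient norm of `C(X,A)/C(X, ℂ1_A)`. -/
noncomputable def quotCXA (a : C(X, A)) : ℝ :=
  sInf { r : ℝ | ∃ b : C(X, A), (∀ x, ∃ c : ℂ, b x = c • (1 : A)) ∧ r = ‖a - b‖ }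

/-- The quotient norm of `C(X,A)/ℂ1_{C(X,A)}`. -/
noncomputable def quotC (a : C(X, A)) : ℝ :=
  ⨅ c : ℂ, ‖a - c • (1 : C(X, A))‖

/-- The seminorm `L^{(n),C(X)}`. -/
noncomputable def LCXn (nn : A → ℝ) (a : C(X, A)) : ℝ≥0∞ :=
  max (lipn nn a) (ENNReal.ofReal (quotCXA a))

/-- The seminorm `L^{(n),ℂ}`. -/
noncomputable def LCn (nn : A → ℝ) (a : C(X, A)) : ℝ≥0∞ :=
  max (lipn nn a) (ENNReal.ofReal (quotC a))

/-- The seminorm `L^{(n),μ}`. -/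
noncomputable def Lmun (nn : A → ℝ) (μ : C(X, A) →L[ℂ] ℂ) (a : C(X, A)) : ℝ≥0∞ :=
  max (lipn nn a) (ENNReal.ofReal ‖a - μ a • (1 : C(X, A))‖)

end Defs

/-- A state on a unital C*-algebra: a continuous linear functional sending `1` to `1`
and `star b * b` to a nonnegative real for every `b`. -/
def IsState {B : Type*} [NormedRing B] [NormedAlgebra ℂ B] [StarRing B]
    (φ : B →L[ℂ] ℂ) : Prop :=
  φ 1 = 1 ∧ ∀ b : B, 0 ≤ (φ (star b * b)).re ∧ (φ (star b * b)).im = 0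

/-- A pure state: an extreme point of the state space. -/
def IsPureState {B : Type*} [NormedRing B] [NormedAlgebra ℂ B] [StarRing B]
    (φ : B →L[ℂ] ℂ) : Prop :=
  φ ∈ Set.extremePoints ℝ { ψ : B →L[ℂ] ℂ | IsState ψ }

/-- The Monge–Kantorovich distance associated to a `[0,∞]`-valued seminorm `L`. -/
noncomputable def mkDist {B : Type*} [NormedRing B] [NormedAlgebra ℂ B] [StarRing B]
    (L : B → ℝ≥0∞) (φ ψ : B →L[ℂ] ℂ) : ℝ≥0∞ :=
  ⨆ (a : B) (_ : IsSelfAdjoint a ∧ L a ≤ 1), ENNReal.ofReal ‖φ a - ψ a‖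

/-!
The Lipschitz part is pointwise: the Jordan and Lie products of `a` and `b` at `x` and at `y`
differ by at most `‖a‖ ‖b x - b y‖ + ‖b‖ ‖a x - a y‖`, and passing between `‖·‖_A` and `‖·‖_n`
costs the factor `N / M`.

For the quotient part let `S` be either algebra of scalars, `C(X, ℂ1_A)` or `ℂ1`. It is central,
so for `t, s ∈ S` we have `a ∘ b - t s = (a - t) ∘ b + t (b - s)` and `{a, b} = {a - t, b}`. This
gives the Leibniz bound for the distance to `S` provided the approximant `t` of `a` can be taken
with `‖t‖ ≤ ‖a‖`. For self-adjoint `a` this is achieved by replacing the scalar `c` (pointwise in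
`x` for `C(X, ℂ1_A)`) by its real part clamped to `[-‖a‖, ‖a‖]`: since the spectrum of `a` lies
in that interval, this does not increase `‖a - c 1‖`.
-/

open Metric

lemma le_mul_infDist_add {E : Type*} [PseudoMetricSpace E] {x : E} {S : Set E}
    (hS : S.Nonempty) {c k d : ℝ} (hk : 0 ≤ k) (h : ∀ s ∈ S, c ≤ k * dist x s + d) :
    c ≤ k * infDist x S + d := by
  rcases hk.eq_or_lt with rfl | hk
  · obtain ⟨s, hs⟩ := hS
    simpa using h s hs
  rw [← sub_le_iff_le_add, ← div_le_iff₀' hk]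
  refine (le_infDist hS).2 fun s hs => ?_
  rw [div_le_iff₀' hk]
  linarith [h s hs]

def HasNormLeApproximants {E : Type*} [SeminormedAddCommGroup E] (S : Set E) (a : E) : Prop :=
  ∀ s ∈ S, ∃ t ∈ S, ‖t‖ ≤ ‖a‖ ∧ dist a t ≤ dist a s

section NormedAlgebra

variable {B : Type*} [NormedRing B]

lemma norm_mul_sub_mul_le {u v u' v' : B} {α β : ℝ} (hu : ‖u‖ ≤ α) (hv' : ‖v'‖ ≤ β) :
    ‖u * v - u' * v'‖ ≤ α * ‖v - v'‖ + β * ‖u - u'‖ := by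
  rw [show u * v - u' * v' = u * (v - v') + (u - u') * v' by noncomm_ring]
  calc ‖u * (v - v') + (u - u') * v'‖ ≤ ‖u‖ * ‖v - v'‖ + ‖u - u'‖ * ‖v'‖ :=
        (norm_add_le _ _).trans (add_le_add (norm_mul_le _ _) (norm_mul_le _ _))
    _ ≤ α * ‖v - v'‖ + ‖u - u'‖ * β := by gcongr
    _ = α * ‖v - v'‖ + β * ‖u - u'‖ := by rw [mul_comm β]

variable [NormedAlgebra ℂ B]

lemma norm_smul_add_le_of_norm_eq_half {c : ℂ} (hc : ‖c‖ = 2⁻¹) {x y : B} {r : ℝ}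
    (hx : ‖x‖ ≤ r) (hy : ‖y‖ ≤ r) : ‖c • (x + y)‖ ≤ r := by
  rw [norm_smul, hc]
  linarith [norm_add_le x y]

lemma norm_smul_sub_le_of_norm_eq_half {c : ℂ} (hc : ‖c‖ = 2⁻¹) {x y : B} {r : ℝ}
    (hx : ‖x‖ ≤ r) (hy : ‖y‖ ≤ r) : ‖c • (x - y)‖ ≤ r := by
  rw [sub_eq_add_neg]
  exact norm_smul_add_le_of_norm_eq_half hc hx (by rwa [norm_neg])

lemma norm_jordan_sub_jordan_le {u v u' v' : B} {α β : ℝ} (hu : ‖u‖ ≤ α) (hu' : ‖u'‖ ≤ α)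
    (hv : ‖v‖ ≤ β) (hv' : ‖v'‖ ≤ β) :
    ‖(2 : ℂ)⁻¹ • (u * v + v * u) - (2 : ℂ)⁻¹ • (u' * v' + v' * u')‖
      ≤ α * ‖v - v'‖ + β * ‖u - u'‖ := by
  rw [← smul_sub, add_sub_add_comm]
  exact norm_smul_add_le_of_norm_eq_half (by simp) (norm_mul_sub_mul_le hu hv')
    ((norm_mul_sub_mul_le hv hu').trans_eq (add_comm _ _))

lemma norm_lie_sub_lie_le {u v u' v' : B} {α β : ℝ} (hu : ‖u‖ ≤ α) (hu' : ‖u'‖ ≤ α)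
    (hv : ‖v‖ ≤ β) (hv' : ‖v'‖ ≤ β) :
    ‖(2 * Complex.I)⁻¹ • (u * v - v * u) - (2 * Complex.I)⁻¹ • (u' * v' - v' * u')‖
      ≤ α * ‖v - v'‖ + β * ‖u - u'‖ := by
  rw [← smul_sub, sub_sub_sub_comm]
  exact norm_smul_sub_le_of_norm_eq_half (by simp) (norm_mul_sub_mul_le hu hv')
    ((norm_mul_sub_mul_le hv hu').trans_eq (add_comm _ _))

variable {S : Set B}

theorem infDist_jordan_le (hmul : ∀ s ∈ S, ∀ t ∈ S, s * t ∈ S)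
    (hcomm : ∀ s ∈ S, ∀ z, Commute s z) (hS : S.Nonempty) {a : B}
    (htrunc : HasNormLeApproximants S a) (b : B) :
    infDist ((2 : ℂ)⁻¹ • (a * b + b * a)) S ≤ ‖a‖ * infDist b S + ‖b‖ * infDist a S := by
  have key : ∀ s ∈ S, ∀ s' ∈ S,
      infDist ((2 : ℂ)⁻¹ • (a * b + b * a)) S ≤ ‖a‖ * dist b s' + ‖b‖ * dist a s := by
    intro s hs s' hs'
    obtain ⟨t, ht, hta, hdist⟩ := htrunc s hs
    have hsplit : (2 : ℂ)⁻¹ • (a * b + b * a) - t * s'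
        = (2 : ℂ)⁻¹ • ((a - t) * b + b * (a - t)) + t * (b - s') := by
      have htb : b * t = t * b := (hcomm t ht b).eq.symm
      simp only [sub_mul, mul_sub, htb]
      module
    calc infDist ((2 : ℂ)⁻¹ • (a * b + b * a)) S
        ≤ ‖(2 : ℂ)⁻¹ • ((a - t) * b + b * (a - t)) + t * (b - s')‖ := by
          rw [← hsplit, ← dist_eq_norm]
          exact infDist_le_dist_of_mem (hmul t ht s' hs')
      _ ≤ ‖a - t‖ * ‖b‖ + ‖t‖ * ‖b - s'‖ := by
          refine norm_add_le_of_le (norm_smul_add_le_of_norm_eq_half (by simp)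
            (norm_mul_le _ _) ?_) (norm_mul_le _ _)
          exact (norm_mul_le _ _).trans_eq (mul_comm _ _)
      _ ≤ ‖a‖ * dist b s' + ‖b‖ * dist a s := by
          rw [← dist_eq_norm, ← dist_eq_norm]
          nlinarith [norm_nonneg b, dist_nonneg (x := b) (y := s')]
  have hb : ∀ s ∈ S,
      infDist ((2 : ℂ)⁻¹ • (a * b + b * a)) S ≤ ‖a‖ * infDist b S + ‖b‖ * dist a s :=
    fun s hs => le_mul_infDist_add hS (norm_nonneg a) (key s hs)
  exact (le_mul_infDist_add hS (norm_nonneg b) fun s hs =>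
    (hb s hs).trans_eq (add_comm _ _)).trans_eq (add_comm _ _)

theorem infDist_lie_le (h0 : (0 : B) ∈ S) (hcomm : ∀ s ∈ S, ∀ z, Commute s z) (a b : B) :
    infDist ((2 * Complex.I)⁻¹ • (a * b - b * a)) S ≤ ‖b‖ * infDist a S := by
  suffices ∀ s ∈ S, infDist ((2 * Complex.I)⁻¹ • (a * b - b * a)) S ≤ ‖b‖ * dist a s + 0 by
    simpa using le_mul_infDist_add ⟨0, h0⟩ (norm_nonneg b) this
  intro s hs
  have hsplit : (2 * Complex.I)⁻¹ • (a * b - b * a)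
      = (2 * Complex.I)⁻¹ • ((a - s) * b - b * (a - s)) := by
    rw [sub_mul, mul_sub, (hcomm s hs b).eq]
    abel_nf
  calc infDist ((2 * Complex.I)⁻¹ • (a * b - b * a)) S
      ≤ dist ((2 * Complex.I)⁻¹ • (a * b - b * a)) 0 := infDist_le_dist_of_mem h0
    _ = ‖(2 * Complex.I)⁻¹ • ((a - s) * b - b * (a - s))‖ := by rw [dist_zero_right, hsplit]
    _ ≤ ‖a - s‖ * ‖b‖ := norm_smul_sub_le_of_norm_eq_half (by simp) (norm_mul_le _ _)
        ((norm_mul_le _ _).trans_eq (mul_comm _ _))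
    _ = ‖b‖ * dist a s + 0 := by rw [add_zero, dist_eq_norm, mul_comm]

end NormedAlgebra

section CStarAlgebra

variable {B : Type*} [CStarAlgebra B]

lemma IsStarNormal.norm_sub_smul_one_le_of_forall_mem_spectrum {v : B} [IsStarNormal v]
    {g t : ℂ} (h : ∀ z ∈ spectrum ℂ v, ‖z - g‖ ≤ ‖z - t‖) : ‖v - g • 1‖ ≤ ‖v - t • 1‖ := by
  have hcfc : ∀ c : ℂ, v - c • 1 = cfc (fun z => z - c) v := fun c => by
    rw [cfc_sub _ _, cfc_id' ℂ v, cfc_const c v, Algebra.algebraMap_eq_smul_one]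
  rw [hcfc g, hcfc t]
  exact norm_cfc_le (norm_nonneg _) fun z hz =>
    (h z hz).trans (norm_apply_le_norm_cfc (fun z => z - t) v hz)

lemma abs_max_neg_min_le {R : ℝ} (hR : 0 ≤ R) (s : ℝ) : |max (-R) (min R s)| ≤ R :=
  abs_le.mpr ⟨le_max_left _ _, max_le (by linarith) (min_le_left _ _)⟩

lemma norm_ofReal_sub_clamp_le {x R : ℝ} (hx : |x| ≤ R) (t : ℂ) :
    ‖(x : ℂ) - (max (-R) (min R t.re) : ℝ)‖ ≤ ‖(x : ℂ) - t‖ := by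
  have hR : -R ≤ R := by linarith [abs_nonneg x]
  rw [← Complex.ofReal_sub, Complex.norm_real, Real.norm_eq_abs, ← Set.coe_projIcc _ _ hR]
  calc |x - Set.projIcc (-R) R hR t.re|
      = |(Set.projIcc (-R) R hR x : ℝ) - Set.projIcc (-R) R hR t.re| := by
        rw [Set.projIcc_of_mem hR (abs_le.mp hx)]
    _ ≤ |x - t.re| := Set.abs_projIcc_sub_projIcc hR
    _ ≤ ‖(x : ℂ) - t‖ := by simpa using Complex.abs_re_le_norm ((x : ℂ) - t)

lemma IsSelfAdjoint.norm_sub_clamp_smul_one_le {v : B} (hv : IsSelfAdjoint v) {R : ℝ}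
    (hR : ‖v‖ ≤ R) (t : ℂ) :
    ‖v - ((max (-R) (min R t.re) : ℝ) : ℂ) • 1‖ ≤ ‖v - t • 1‖ := by
  have := hv.isStarNormal
  refine IsStarNormal.norm_sub_smul_one_le_of_forall_mem_spectrum fun z hz => ?_
  rw [hv.mem_spectrum_eq_re hz]
  refine norm_ofReal_sub_clamp_le ?_ t
  exact (Complex.abs_re_le_norm z).trans
    ((IsometricContinuousFunctionalCalculus.norm_spectrum_le v hz).trans hR)

lemma IsSelfAdjoint.hasNormLeApproximants_range_smul_one {a : B} (ha : IsSelfAdjoint a) :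
    HasNormLeApproximants (Set.range fun c : ℂ => c • (1 : B)) a := by
  rintro _ ⟨c, rfl⟩
  set g : ℝ := max (-‖a‖) (min ‖a‖ c.re)
  refine ⟨(g : ℂ) • 1, ⟨g, rfl⟩, ?_, ?_⟩
  · rcases subsingleton_or_nontrivial B with hB | hB
    · simp [Subsingleton.elim (1 : B) 0]
    · simpa using abs_max_neg_min_le (norm_nonneg a) c.re
  · simpa only [dist_eq_norm] using ha.norm_sub_clamp_smul_one_le le_rfl c

end CStarAlgebra

section ScalarMultiplesOfOne

variable {B : Type*} [Ring B] [Algebra ℂ B]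

lemma zero_mem_range_smul_one : (0 : B) ∈ Set.range (fun c : ℂ => c • (1 : B)) :=
  ⟨0, zero_smul ℂ 1⟩

lemma mul_mem_range_smul_one :
    ∀ s ∈ Set.range (fun c : ℂ => c • (1 : B)), ∀ t ∈ Set.range (fun c : ℂ => c • (1 : B)),
      s * t ∈ Set.range (fun c : ℂ => c • (1 : B)) := by
  rintro _ ⟨c, rfl⟩ _ ⟨d, rfl⟩
  exact ⟨c * d, by simp only [smul_mul_smul_comm, one_mul]⟩

lemma commute_of_mem_range_smul_one :
    ∀ s ∈ Set.range (fun c : ℂ => c • (1 : B)), ∀ z : B, Commute s z := by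
  rintro _ ⟨c, rfl⟩ z
  exact (Commute.one_left z).smul_left c

end ScalarMultiplesOfOne

section ScalarFunctions

variable {X : Type*} [TopologicalSpace X] {A : Type*} [NormedRing A] [NormedAlgebra ℂ A]

variable (X A) in
def scalarFunctions : Set C(X, A) := {b | ∀ x, ∃ c : ℂ, b x = c • (1 : A)}

lemma zero_mem_scalarFunctions : (0 : C(X, A)) ∈ scalarFunctions X A :=
  fun _ => ⟨0, (zero_smul ℂ 1).symm⟩

lemma mul_mem_scalarFunctions :
    ∀ s ∈ scalarFunctions X A, ∀ t ∈ scalarFunctions X A, s * t ∈ scalarFunctions X A :=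
  fun s hs t ht x => by
    obtain ⟨c, hc⟩ := hs x
    obtain ⟨d, hd⟩ := ht x
    exact ⟨c * d, by rw [ContinuousMap.mul_apply, hc, hd, smul_mul_smul_comm, one_mul]⟩

lemma commute_of_mem_scalarFunctions :
    ∀ s ∈ scalarFunctions X A, ∀ z : C(X, A), Commute s z := fun s hs z =>
  ContinuousMap.ext fun x => by
    obtain ⟨c, hc⟩ := hs x
    simpa only [ContinuousMap.mul_apply, hc] using
      (commute_of_mem_range_smul_one _ ⟨c, rfl⟩ (z x)).eq

end ScalarFunctions

lemma IsSelfAdjoint.hasNormLeApproximants_scalarFunctions {X : Type*} [TopologicalSpace X]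
    [CompactSpace X] {A : Type*} [NormedRing A] [StarRing A] [CStarRing A]
    [NormedAlgebra ℂ A] [StarModule ℂ A] [CompleteSpace A] {a : C(X, A)} (ha : IsSelfAdjoint a) :
    HasNormLeApproximants (scalarFunctions X A) a := by
  intro s hs
  let _ : CStarAlgebra A := {}
  rcases subsingleton_or_nontrivial A with hA | hA
  · exact ⟨a, fun _ => ⟨0, Subsingleton.elim _ _⟩, le_rfl, by simp⟩
  choose c hc using hs
  have hc_cont : Continuous c := by
    refine (algebraMap_isometry ℂ A).isEmbedding.continuous_iff.mpr ?_
    convert s.continuous using 1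
    funext x
    simp [hc x, Algebra.algebraMap_eq_smul_one]
  set g : X → ℝ := fun x => max (-‖a‖) (min ‖a‖ (c x).re)
  refine ⟨⟨fun x => (g x : ℂ) • (1 : A), by fun_prop⟩, fun x => ⟨g x, rfl⟩, ?_, ?_⟩
  · refine (ContinuousMap.norm_le _ (norm_nonneg a)).2 fun x => ?_
    simpa [norm_smul] using abs_max_neg_min_le (norm_nonneg a) (c x).re
  · rw [dist_eq_norm, dist_eq_norm]
    refine (ContinuousMap.norm_le _ (norm_nonneg _)).2 fun x => ?_
    have hax : IsSelfAdjoint (a x) := show star (a x) = a x from congrArg (· x) ha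
    calc ‖a x - (g x : ℂ) • 1‖ ≤ ‖a x - c x • 1‖ :=
          hax.norm_sub_clamp_smul_one_le (a.norm_coe_le_norm x) (c x)
      _ = ‖(a - s) x‖ := by rw [ContinuousMap.sub_apply, hc x]
      _ ≤ ‖a - s‖ := (a - s).norm_coe_le_norm x

section LipschitzSeminorm

variable {X : Type*} [MetricSpace X] {A : Type*} [NormedRing A] {nn : A → ℝ} {M N : ℝ}

lemma lipn_le_of_norm_sub_le (hM : 0 < M) (hN : 0 ≤ N)
    (hMN : ∀ x : A, M * nn x ≤ ‖x‖ ∧ ‖x‖ ≤ N * nn x) {α β : ℝ} (hα : 0 ≤ α) (hβ : 0 ≤ β)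
    {P a b : C(X, A)} (h : ∀ x y, ‖P x - P y‖ ≤ α * ‖b x - b y‖ + β * ‖a x - a y‖) :
    lipn nn P ≤ ENNReal.ofReal (N / M) *
      (ENNReal.ofReal α * lipn nn b + ENNReal.ofReal β * lipn nn a) := by
  refine iSup₂_le fun p hp => ?_
  set d := dist p.1 p.2
  have hd : 0 < d := dist_pos.2 hp
  have hnn : nn (P p.1 - P p.2) ≤
      N / M * (α * nn (b p.1 - b p.2) + β * nn (a p.1 - a p.2)) := by
    refine le_of_mul_le_mul_left ?_ hM
    calc M * nn (P p.1 - P p.2) ≤ ‖P p.1 - P p.2‖ := (hMN _).1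
      _ ≤ α * ‖b p.1 - b p.2‖ + β * ‖a p.1 - a p.2‖ := h _ _
      _ ≤ α * (N * nn (b p.1 - b p.2)) + β * (N * nn (a p.1 - a p.2)) := by
          gcongr
          exacts [(hMN _).2, (hMN _).2]
      _ = M * (N / M * (α * nn (b p.1 - b p.2) + β * nn (a p.1 - a p.2))) := by
          field_simp
  have hquot : nn (P p.1 - P p.2) / d ≤
      N / M * (α * (nn (b p.1 - b p.2) / d) + β * (nn (a p.1 - a p.2) / d)) := by
    calc nn (P p.1 - P p.2) / d
        ≤ N / M * (α * nn (b p.1 - b p.2) + β * nn (a p.1 - a p.2)) / d := by gcongr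
      _ = _ := by ring
  calc ENNReal.ofReal (nn (P p.1 - P p.2) / d)
      ≤ ENNReal.ofReal (N / M) * (ENNReal.ofReal α * ENNReal.ofReal (nn (b p.1 - b p.2) / d)
          + ENNReal.ofReal β * ENNReal.ofReal (nn (a p.1 - a p.2) / d)) := by
        refine (ENNReal.ofReal_le_ofReal hquot).trans ?_
        rw [ENNReal.ofReal_mul (by positivity), ← ENNReal.ofReal_mul hα, ← ENNReal.ofReal_mul hβ]
        gcongr
        exact ENNReal.ofReal_add_le
    _ ≤ ENNReal.ofReal (N / M) *
        (ENNReal.ofReal α * lipn nn b + ENNReal.ofReal β * lipn nn a) := by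
        gcongr <;> exact le_iSup₂_of_le p hp le_rfl

variable [CompactSpace X]

noncomputable def lipDistSeminorm (nn : A → ℝ) (S : Set C(X, A)) (a : C(X, A)) : ℝ≥0∞ :=
  max (lipn nn a) (ENNReal.ofReal (infDist a S))

lemma norm_le_div_mul_norm (hM : 0 < M) (hN : 0 ≤ N)
    (hMN : ∀ x : A, M * nn x ≤ ‖x‖ ∧ ‖x‖ ≤ N * nn x) (a : C(X, A)) : ‖a‖ ≤ N / M * ‖a‖ := by
  refine (ContinuousMap.norm_le a (by positivity)).2 fun x => ?_
  calc ‖a x‖ ≤ N * nn (a x) := (hMN _).2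
    _ ≤ N * (‖a x‖ / M) := by
        gcongr
        exact (le_div_iff₀' hM).2 (hMN _).1
    _ = N / M * ‖a x‖ := by ring
    _ ≤ N / M * ‖a‖ := by
        gcongr
        exact a.norm_coe_le_norm x

lemma lipDistSeminorm_le (hM : 0 < M) (hN : 0 ≤ N)
    (hMN : ∀ x : A, M * nn x ≤ ‖x‖ ∧ ‖x‖ ≤ N * nn x) {S : Set C(X, A)} {P a b : C(X, A)}
    (hlip : ∀ x y, ‖P x - P y‖ ≤ ‖a‖ * ‖b x - b y‖ + ‖b‖ * ‖a x - a y‖)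
    (hdist : infDist P S ≤ ‖a‖ * infDist b S + ‖b‖ * infDist a S) :
    lipDistSeminorm nn S P ≤ ENNReal.ofReal (N / M) *
      (ENNReal.ofReal ‖a‖ * lipDistSeminorm nn S b
        + ENNReal.ofReal ‖b‖ * lipDistSeminorm nn S a) := by
  refine max_le ?_ ?_
  · refine (lipn_le_of_norm_sub_le hM hN hMN (norm_nonneg a) (norm_nonneg b) hlip).trans ?_
    gcongr <;> exact le_max_left _ _
  have ha := norm_le_div_mul_norm hM hN hMN a
  have hb := norm_le_div_mul_norm hM hN hMN b
  calc ENNReal.ofReal (infDist P S)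
      ≤ ENNReal.ofReal (N / M * (‖a‖ * infDist b S + ‖b‖ * infDist a S)) := by
        refine ENNReal.ofReal_le_ofReal (hdist.trans ?_)
        nlinarith [infDist_nonneg (x := a) (s := S), infDist_nonneg (x := b) (s := S)]
    _ = ENNReal.ofReal (N / M) * (ENNReal.ofReal ‖a‖ * ENNReal.ofReal (infDist b S)
          + ENNReal.ofReal ‖b‖ * ENNReal.ofReal (infDist a S)) := by
        rw [ENNReal.ofReal_mul (by positivity),
          ENNReal.ofReal_add (mul_nonneg (norm_nonneg _) infDist_nonneg)
            (mul_nonneg (norm_nonneg _) infDist_nonneg),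
          ENNReal.ofReal_mul (norm_nonneg _), ENNReal.ofReal_mul (norm_nonneg _)]
    _ ≤ _ := by gcongr <;> exact le_max_right _ _

variable [NormedAlgebra ℂ A]

theorem lipDistSeminorm_jordan_lie_le (hM : 0 < M) (hN : 0 ≤ N)
    (hMN : ∀ x : A, M * nn x ≤ ‖x‖ ∧ ‖x‖ ≤ N * nn x) {S : Set C(X, A)} (h0 : 0 ∈ S)
    (hmul : ∀ s ∈ S, ∀ t ∈ S, s * t ∈ S) (hcomm : ∀ s ∈ S, ∀ z, Commute s z) {a : C(X, A)}
    (htrunc : HasNormLeApproximants S a) (b : C(X, A)) :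
    max (lipDistSeminorm nn S ((2 : ℂ)⁻¹ • (a * b + b * a)))
        (lipDistSeminorm nn S ((2 * Complex.I)⁻¹ • (a * b - b * a)))
      ≤ ENNReal.ofReal (N / M) * (ENNReal.ofReal ‖a‖ * lipDistSeminorm nn S b
          + ENNReal.ofReal ‖b‖ * lipDistSeminorm nn S a) :=
  max_le
    (lipDistSeminorm_le hM hN hMN
      (fun x y => norm_jordan_sub_jordan_le (a.norm_coe_le_norm x) (a.norm_coe_le_norm y)
        (b.norm_coe_le_norm x) (b.norm_coe_le_norm y))
      (infDist_jordan_le hmul hcomm ⟨0, h0⟩ htrunc b))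
    (lipDistSeminorm_le hM hN hMN
      (fun x y => norm_lie_sub_lie_le (a.norm_coe_le_norm x) (a.norm_coe_le_norm y)
        (b.norm_coe_le_norm x) (b.norm_coe_le_norm y))
      ((infDist_lie_le h0 hcomm a b).trans
        (le_add_of_nonneg_left (mul_nonneg (norm_nonneg a) infDist_nonneg))))

lemma quotCXA_eq_infDist (a : C(X, A)) : quotCXA a = infDist a (scalarFunctions X A) := by
  rw [quotCXA, infDist_eq_iInf, ← sInf_image']
  congr 1
  ext r
  simp [dist_eq_norm, eq_comm, scalarFunctions]

lemma quotC_eq_infDist (a : C(X, A)) :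
    quotC a = infDist a (Set.range fun c : ℂ => c • (1 : C(X, A))) := by
  rw [quotC, infDist_eq_iInf, iInf_range']
  simp only [dist_eq_norm]

lemma LCXn_eq_lipDistSeminorm : LCXn nn = lipDistSeminorm (X := X) nn (scalarFunctions X A) :=
  funext fun a => by rw [LCXn, lipDistSeminorm, quotCXA_eq_infDist]

lemma LCn_eq_lipDistSeminorm :
    LCn nn = lipDistSeminorm (X := X) nn (Set.range fun c : ℂ => c • (1 : C(X, A))) :=
  funext fun a => by rw [LCn, lipDistSeminorm, quotC_eq_infDist]

end LipschitzSeminorm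

theorem statement2_general
    (X : Type*) [MetricSpace X] [CompactSpace X]
    (A : Type*) [NormedRing A] [StarRing A] [CStarRing A]
      [NormedAlgebra ℂ A] [StarModule ℂ A] [CompleteSpace A]
    (nn : A → ℝ) (M N : ℝ) (hM : 0 < M) (hN : 0 < N)
    (hMN : ∀ x : A, M * nn x ≤ ‖x‖ ∧ ‖x‖ ≤ N * nn x) :
    (∀ a b : C(X, A), IsSelfAdjoint a → IsSelfAdjoint b →
      LCXn nn a < ⊤ → LCXn nn b < ⊤ →
      max (LCXn nn (((2 : ℂ)⁻¹) • (a * b + b * a)))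
          (LCXn nn (((2 * Complex.I)⁻¹) • (a * b - b * a)))
        ≤ ENNReal.ofReal (N / M) *
            (ENNReal.ofReal ‖a‖ * LCXn nn b + ENNReal.ofReal ‖b‖ * LCXn nn a)) ∧
    (∀ a b : C(X, A), IsSelfAdjoint a → IsSelfAdjoint b →
      LCn nn a < ⊤ → LCn nn b < ⊤ →
      max (LCn nn (((2 : ℂ)⁻¹) • (a * b + b * a)))
          (LCn nn (((2 * Complex.I)⁻¹) • (a * b - b * a)))
        ≤ ENNReal.ofReal (N / M) *
            (ENNReal.ofReal ‖a‖ * LCn nn b + ENNReal.ofReal ‖b‖ * LCn nn a)) := by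
  let _ : CStarAlgebra C(X, A) := {}
  refine ⟨fun a b ha _ _ _ => ?_, fun a b ha _ _ _ => ?_⟩
  · rw [LCXn_eq_lipDistSeminorm]
    exact lipDistSeminorm_jordan_lie_le hM hN.le hMN zero_mem_scalarFunctions
      mul_mem_scalarFunctions commute_of_mem_scalarFunctions
      ha.hasNormLeApproximants_scalarFunctions b
  · rw [LCn_eq_lipDistSeminorm]
    exact lipDistSeminorm_jordan_lie_le hM hN.le hMN zero_mem_range_smul_one
      mul_mem_range_smul_one commute_of_mem_range_smul_one
      ha.hasNormLeApproximants_range_smul_one b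

/-- `L^{(n),C(X)}` and `L^{(n),ℂ}` are `(N/M, 0)`-quasi-Leibniz on
self-adjoint elements with finite seminorm. -/
theorem statement2
    (X : Type*) [MetricSpace X] [CompactSpace X]
    (A : Type*) [NormedRing A] [StarRing A] [CStarRing A]
      [NormedAlgebra ℂ A] [StarModule ℂ A] [CompleteSpace A]
    (nn : A → ℝ) (hnn : IsNormOn A nn) (M N : ℝ) (hM : 0 < M) (hN : 0 < N)
    (hMN : ∀ x : A, M * nn x ≤ ‖x‖ ∧ ‖x‖ ≤ N * nn x) :
    (∀ a b : C(X, A), IsSelfAdjoint a → IsSelfAdjoint b →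
      LCXn nn a < ⊤ → LCXn nn b < ⊤ →
      max (LCXn nn (((2 : ℂ)⁻¹) • (a * b + b * a)))
          (LCXn nn (((2 * Complex.I)⁻¹) • (a * b - b * a)))
        ≤ ENNReal.ofReal (N / M) *
            (ENNReal.ofReal ‖a‖ * LCXn nn b + ENNReal.ofReal ‖b‖ * LCXn nn a)) ∧
    (∀ a b : C(X, A), IsSelfAdjoint a → IsSelfAdjoint b →
      LCn nn a < ⊤ → LCn nn b < ⊤ →
      max (LCn nn (((2 : ℂ)⁻¹) • (a * b + b * a)))
          (LCn nn (((2 * Complex.I)⁻¹) • (a * b - b * a)))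
        ≤ ENNReal.ofReal (N / M) *
            (ENNReal.ofReal ‖a‖ * LCn nn b + ENNReal.ofReal ‖b‖ * LCn nn a)) :=
  statement2_general X A nn M N hM hN hMN
end

section
/- Let (X, d_X) be a compact metric space, A a unital C*-algebra, ‖·‖_n a norm on A with constants M, N > 0 satisfying M‖·‖_n ≤ ‖·‖_A ≤ N‖·‖_n, and μ a state on C(X,A). Then the seminorm L^{(n),μ} is (max{N/M, 2}, 0)-quasi-Leibniz: for all self-adjoint a, b ∈ C(X,A) with L^{(n),μ}(a), L^{(n),μ}(b) < ∞, max{ L^{(n),μ}(a∘b), L^{(n),μ}({a,b}) } ≤ max{N/M, 2}·( ‖a‖_{C(X,A)} L^{(n),μ}(b) + ‖b‖_{C(X,A)} L^{(n),μ}(a) ). -/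
/-!
The Lipschitz part of `L^{(n),μ}` obeys the Leibniz rule because `f x g x - f y g y =
f x (g x - g y) + (f x - f y) g y`; estimating in the C*-norm and converting back to `‖·‖_n`
costs the factor `N / M`.

For the part `‖c - μ(c) 1‖`, note that `|μ(w)| ≤ ‖w‖` for self-adjoint `w`, so
`‖c - μ(c) 1‖ ≤ 2 ‖c - z 1‖` whenever `c - z 1` is self-adjoint. With `a' = a - μ(a) 1` and
`b' = b - μ(b) 1` one has `a ∘ b - μ(a) μ(b) 1 = (a b' + b' a) / 2 + μ(b) a'` and
`{a, b} = {a, b'}`, whose norms are at most `‖a‖ ‖b'‖ + ‖b‖ ‖a'‖`.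
-/

open scoped ENNReal

section JordanLie

open Complex

variable {R : Type*} [Ring R] [Algebra ℂ R]

lemma jordan_sub_smul_one (a b : R) (α β : ℂ) :
    (2 : ℂ)⁻¹ • (a * b + b * a) - (α * β) • (1 : R) =
      (2 : ℂ)⁻¹ • (a * (b - β • 1) + (b - β • 1) * a) + β • (a - α • 1) := by
  simp only [mul_sub, sub_mul, mul_smul_comm, smul_mul_assoc, mul_one, one_mul]
  module

lemma lie_eq_lie_sub_smul_one (a b : R) (β : ℂ) :
    (2 * I)⁻¹ • (a * b - b * a) = (2 * I)⁻¹ • (a * (b - β • 1) - (b - β • 1) * a) := by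
  simp only [mul_sub, sub_mul, mul_smul_comm, smul_mul_assoc, mul_one, one_mul]
  module

variable [StarRing R] [StarModule ℂ R] {a b : R}

lemma IsSelfAdjoint.jordan (ha : IsSelfAdjoint a) (hb : IsSelfAdjoint b) :
    IsSelfAdjoint ((2 : ℂ)⁻¹ • (a * b + b * a)) := by
  simp [IsSelfAdjoint, star_smul, ha.star_eq, hb.star_eq, add_comm]

lemma IsSelfAdjoint.lie (ha : IsSelfAdjoint a) (hb : IsSelfAdjoint b) :
    IsSelfAdjoint ((2 * I)⁻¹ • (a * b - b * a)) := by
  have hI : star (2 * I)⁻¹ = -(2 * I)⁻¹ := by simp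
  rw [IsSelfAdjoint, star_smul, hI, star_sub, star_mul, star_mul, ha.star_eq, hb.star_eq,
    neg_smul, ← smul_neg, neg_sub]

end JordanLie

section NormedAlgebra

open Complex

variable {R : Type*} [NormedRing R] [NormedAlgebra ℂ R]

lemma norm_jordan_le (a b : R) : ‖(2 : ℂ)⁻¹ • (a * b + b * a)‖ ≤ ‖a‖ * ‖b‖ := by
  rw [norm_smul, norm_inv, Complex.norm_two]
  linarith [norm_add_le_of_le (norm_mul_le a b) (norm_mul_le b a)]

lemma norm_lie_le (a b : R) : ‖(2 * I)⁻¹ • (a * b - b * a)‖ ≤ ‖a‖ * ‖b‖ := by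
  rw [norm_smul, norm_inv, norm_mul, Complex.norm_two, norm_I]
  linarith [norm_sub_le_of_le (norm_mul_le a b) (norm_mul_le b a)]

end NormedAlgebra

namespace IsState

open ComplexOrder Complex

variable {B : Type*}

lemma apply_nonneg [NormedRing B] [NormedAlgebra ℂ B] [StarRing B] [PartialOrder B]
    [StarOrderedRing B] {φ : B →L[ℂ] ℂ} (hφ : IsState φ) {x : B} (hx : 0 ≤ x) : 0 ≤ φ x := by
  rw [StarOrderedRing.nonneg_iff] at hx
  induction hx using AddSubmonoid.closure_induction with
  | mem _ hb =>
    obtain ⟨b, rfl⟩ := hb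
    exact Complex.nonneg_iff.mpr ⟨(hφ.2 b).1, (hφ.2 b).2.symm⟩
  | zero => simp
  | add _ _ _ _ h₁ h₂ => simpa using add_nonneg h₁ h₂

lemma nontrivial [NormedRing B] [NormedAlgebra ℂ B] [StarRing B] {φ : B →L[ℂ] ℂ}
    (hφ : IsState φ) : Nontrivial B :=
  ⟨⟨1, 0, fun h => by simpa [h] using hφ.1⟩⟩

variable [CStarAlgebra B] {φ : B →L[ℂ] ℂ}

lemma apply_algebraMap (hφ : IsState φ) (r : ℝ) : φ (algebraMap ℝ B r) = r := by
  rw [Algebra.algebraMap_eq_smul_one, ← Complex.coe_smul, map_smul, hφ.1, smul_eq_mul, mul_one]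

lemma apply_mem_Icc (hφ : IsState φ) {x : B} (hx : IsSelfAdjoint x) :
    φ x ∈ Set.Icc (-(‖x‖ : ℂ)) ‖x‖ := by
  let := CStarAlgebra.spectralOrder B
  have := CStarAlgebra.spectralOrderedRing B
  have hmono {y z : B} (h : y ≤ z) : φ y ≤ φ z := by
    simpa using apply_nonneg hφ (sub_nonneg.mpr h)
  constructor
  · simpa [apply_algebraMap hφ] using hmono hx.neg_algebraMap_norm_le_self
  · simpa [apply_algebraMap hφ] using hmono hx.le_algebraMap_norm_self

lemma im_apply_eq_zero (hφ : IsState φ) {x : B} (hx : IsSelfAdjoint x) : (φ x).im = 0 :=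
  (Complex.le_def.mp (apply_mem_Icc hφ hx).2).2

lemma norm_apply_le (hφ : IsState φ) {x : B} (hx : IsSelfAdjoint x) : ‖φ x‖ ≤ ‖x‖ := by
  obtain ⟨hge, hle⟩ := apply_mem_Icc hφ hx
  rw [← Complex.re_add_im (φ x), im_apply_eq_zero hφ hx]
  simpa [abs_le] using ⟨(Complex.le_def.mp hge).1, (Complex.le_def.mp hle).1⟩

lemma isSelfAdjoint_apply (hφ : IsState φ) {x : B} (hx : IsSelfAdjoint x) :
    IsSelfAdjoint (φ x) :=
  Complex.conj_eq_iff_im.mpr (im_apply_eq_zero hφ hx)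

lemma norm_sub_apply_smul_one_le (hφ : IsState φ) {c : B} (z : ℂ)
    (hc : IsSelfAdjoint (c - z • 1)) : ‖c - φ c • 1‖ ≤ 2 * ‖c - z • 1‖ := by
  have := hφ.nontrivial
  set w := c - z • 1
  have hw : c - φ c • 1 = w - φ w • 1 := by
    simp only [w, map_sub, map_smul, hφ.1, smul_eq_mul, mul_one, sub_smul]
    abel
  calc ‖c - φ c • 1‖ ≤ ‖w‖ + ‖φ w‖ := by
        simpa only [hw, norm_smul, norm_one, mul_one] using norm_sub_le w (φ w • (1 : B))
    _ ≤ 2 * ‖w‖ := by linarith [norm_apply_le hφ hc]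

variable {a b : B}

lemma norm_jordan_sub_apply_smul_one_le (hφ : IsState φ) (ha : IsSelfAdjoint a)
    (hb : IsSelfAdjoint b) :
    ‖(2 : ℂ)⁻¹ • (a * b + b * a) - φ ((2 : ℂ)⁻¹ • (a * b + b * a)) • 1‖ ≤
      2 * (‖a‖ * ‖b - φ b • 1‖ + ‖b‖ * ‖a - φ a • 1‖) := by
  have hab : IsSelfAdjoint (φ a * φ b) :=
    (isSelfAdjoint_apply hφ ha).mul (isSelfAdjoint_apply hφ hb)
  refine (norm_sub_apply_smul_one_le hφ _ ((ha.jordan hb).sub (hab.smul (.one B)))).trans ?_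
  rw [jordan_sub_smul_one]
  gcongr 2 * ?_
  refine (norm_add_le _ _).trans (add_le_add (norm_jordan_le _ _) ?_)
  rw [norm_smul]
  gcongr
  exact norm_apply_le hφ hb

lemma norm_lie_sub_apply_smul_one_le (hφ : IsState φ) (ha : IsSelfAdjoint a)
    (hb : IsSelfAdjoint b) :
    ‖(2 * I)⁻¹ • (a * b - b * a) - φ ((2 * I)⁻¹ • (a * b - b * a)) • 1‖ ≤
      2 * (‖a‖ * ‖b - φ b • 1‖ + ‖b‖ * ‖a - φ a • 1‖) := by
  refine (norm_sub_apply_smul_one_le hφ 0 (by simpa using ha.lie hb)).trans ?_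
  rw [zero_smul, sub_zero, lie_eq_lie_sub_smul_one a b (φ b)]
  gcongr 2 * ?_
  exact (norm_lie_le _ _).trans (le_add_of_nonneg_right (by positivity))

end IsState

section ContinuousMap

open Complex

variable {X : Type*} [TopologicalSpace X] [CompactSpace X] {A : Type*} [NormedRing A]

lemma norm_mul_apply_sub_mul_apply_le (f g : C(X, A)) (x y : X) :
    ‖f x * g x - f y * g y‖ ≤ ‖f‖ * ‖g x - g y‖ + ‖g‖ * ‖f x - f y‖ := by
  have h : f x * g x - f y * g y = f x * (g x - g y) + (f x - f y) * g y := by noncomm_ring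
  rw [h, mul_comm ‖g‖]
  refine (norm_add_le _ _).trans (add_le_add ?_ ?_)
  · exact (norm_mul_le _ _).trans (by gcongr; exact f.norm_coe_le_norm x)
  · exact (norm_mul_le _ _).trans (by gcongr; exact g.norm_coe_le_norm y)

variable [NormedAlgebra ℂ A]

lemma norm_jordan_apply_sub_le (a b : C(X, A)) (x y : X) :
    ‖((2 : ℂ)⁻¹ • (a * b + b * a)) x - ((2 : ℂ)⁻¹ • (a * b + b * a)) y‖ ≤
      ‖a‖ * ‖b x - b y‖ + ‖b‖ * ‖a x - a y‖ := by
  have h : ((2 : ℂ)⁻¹ • (a * b + b * a)) x - ((2 : ℂ)⁻¹ • (a * b + b * a)) y =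
      (2 : ℂ)⁻¹ • ((a x * b x - a y * b y) + (b x * a x - b y * a y)) := by
    simp only [ContinuousMap.smul_apply, ContinuousMap.add_apply, ContinuousMap.mul_apply]
    module
  rw [h, norm_smul, norm_inv, Complex.norm_two]
  linarith [norm_add_le_of_le (norm_mul_apply_sub_mul_apply_le a b x y)
    (norm_mul_apply_sub_mul_apply_le b a x y)]

lemma norm_lie_apply_sub_le (a b : C(X, A)) (x y : X) :
    ‖((2 * I)⁻¹ • (a * b - b * a)) x - ((2 * I)⁻¹ • (a * b - b * a)) y‖ ≤
      ‖a‖ * ‖b x - b y‖ + ‖b‖ * ‖a x - a y‖ := by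
  have h : ((2 * I)⁻¹ • (a * b - b * a)) x - ((2 * I)⁻¹ • (a * b - b * a)) y =
      (2 * I)⁻¹ • ((a x * b x - a y * b y) - (b x * a x - b y * a y)) := by
    simp only [ContinuousMap.smul_apply, ContinuousMap.sub_apply, ContinuousMap.mul_apply]
    module
  rw [h, norm_smul, norm_inv, norm_mul, Complex.norm_two, norm_I]
  linarith [norm_sub_le_of_le (norm_mul_apply_sub_mul_apply_le a b x y)
    (norm_mul_apply_sub_mul_apply_le b a x y)]

end ContinuousMap

lemma ENNReal.ofReal_mul_mul_add_mul (K : ℝ) {x u y v : ℝ} (hx : 0 ≤ x) (hu : 0 ≤ u)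
    (hy : 0 ≤ y) (hv : 0 ≤ v) :
    ENNReal.ofReal (K * (x * u + y * v)) =
      ENNReal.ofReal K * (ENNReal.ofReal x * ENNReal.ofReal u +
        ENNReal.ofReal y * ENNReal.ofReal v) := by
  rw [ENNReal.ofReal_mul' (by positivity), ENNReal.ofReal_add (by positivity) (by positivity),
    ENNReal.ofReal_mul hx, ENNReal.ofReal_mul hy]

section Seminorms

variable {X : Type*} [MetricSpace X] {A : Type*} [NormedRing A] {nn : A → ℝ}

lemma ofReal_div_dist_le_lipn (a : C(X, A)) {x y : X} (hxy : x ≠ y) :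
    ENNReal.ofReal (nn (a x - a y) / dist x y) ≤ lipn nn a :=
  le_iSup₂_of_le (x, y) hxy le_rfl

variable [CompactSpace X] {M N : ℝ}

lemma lipn_le_of_norm_apply_sub_le (hnn : ∀ x, 0 ≤ nn x) (hM : 0 < M)
    (hMN : ∀ x : A, M * nn x ≤ ‖x‖ ∧ ‖x‖ ≤ N * nn x) {a b c : C(X, A)}
    (hc : ∀ x y, ‖c x - c y‖ ≤ ‖a‖ * ‖b x - b y‖ + ‖b‖ * ‖a x - a y‖) :
    lipn nn c ≤ ENNReal.ofReal (N / M) *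
      (ENNReal.ofReal ‖a‖ * lipn nn b + ENNReal.ofReal ‖b‖ * lipn nn a) := by
  refine iSup₂_le fun ⟨x, y⟩ hxy => ?_
  have hd : 0 < dist x y := dist_pos.mpr hxy
  have hnn_c : nn (c x - c y) ≤ N / M * (‖a‖ * nn (b x - b y) + ‖b‖ * nn (a x - a y)) := by
    rw [div_mul_eq_mul_div, le_div_iff₀ hM, mul_comm]
    calc M * nn (c x - c y) ≤ ‖a‖ * ‖b x - b y‖ + ‖b‖ * ‖a x - a y‖ :=
          (hMN _).1.trans (hc x y)
      _ ≤ ‖a‖ * (N * nn (b x - b y)) + ‖b‖ * (N * nn (a x - a y)) := by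
          gcongr <;> exact (hMN _).2
      _ = N * (‖a‖ * nn (b x - b y) + ‖b‖ * nn (a x - a y)) := by ring
  calc ENNReal.ofReal (nn (c x - c y) / dist x y)
      ≤ ENNReal.ofReal (N / M * (‖a‖ * (nn (b x - b y) / dist x y) +
          ‖b‖ * (nn (a x - a y) / dist x y))) := by
        refine ENNReal.ofReal_le_ofReal ?_
        rw [mul_div_assoc', mul_div_assoc', ← add_div, ← mul_div_assoc]
        gcongr
    _ ≤ _ := by
        rw [ENNReal.ofReal_mul_mul_add_mul _ (norm_nonneg _) (div_nonneg (hnn _) hd.le)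
          (norm_nonneg _) (div_nonneg (hnn _) hd.le)]
        gcongr <;> exact ofReal_div_dist_le_lipn _ hxy

variable [NormedAlgebra ℂ A]

lemma Lmun_le_of_norm_apply_sub_le (hnn : ∀ x, 0 ≤ nn x) (hM : 0 < M)
    (hMN : ∀ x : A, M * nn x ≤ ‖x‖ ∧ ‖x‖ ≤ N * nn x) (μ : C(X, A) →L[ℂ] ℂ) {a b c : C(X, A)}
    (hc : ∀ x y, ‖c x - c y‖ ≤ ‖a‖ * ‖b x - b y‖ + ‖b‖ * ‖a x - a y‖)
    (hcμ : ‖c - μ c • 1‖ ≤ 2 * (‖a‖ * ‖b - μ b • 1‖ + ‖b‖ * ‖a - μ a • 1‖)) :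
    Lmun nn μ c ≤ ENNReal.ofReal (max (N / M) 2) *
      (ENNReal.ofReal ‖a‖ * Lmun nn μ b + ENNReal.ofReal ‖b‖ * Lmun nn μ a) := by
  refine max_le ?_ ?_
  · refine (lipn_le_of_norm_apply_sub_le hnn hM hMN hc).trans ?_
    gcongr
    exacts [le_max_left _ _, le_max_left _ _, le_max_left _ _]
  · refine (ENNReal.ofReal_le_ofReal hcμ).trans ?_
    rw [ENNReal.ofReal_mul_mul_add_mul _ (norm_nonneg _) (norm_nonneg _) (norm_nonneg _)
      (norm_nonneg _)]
    gcongr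
    exacts [le_max_right _ _, le_max_right _ _, le_max_right _ _]

end Seminorms

theorem statement3_general
    (X : Type*) [MetricSpace X] [CompactSpace X]
    (A : Type*) [NormedRing A] [StarRing A] [CStarRing A]
      [NormedAlgebra ℂ A] [StarModule ℂ A] [CompleteSpace A]
    (nn : A → ℝ) (hnn : IsNormOn A nn) (M N : ℝ) (hM : 0 < M)
    (hMN : ∀ x : A, M * nn x ≤ ‖x‖ ∧ ‖x‖ ≤ N * nn x)
    (μ : C(X, A) →L[ℂ] ℂ) (hμ : IsState μ) :
    ∀ a b : C(X, A), IsSelfAdjoint a → IsSelfAdjoint b →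
      Lmun nn μ a < ⊤ → Lmun nn μ b < ⊤ →
      max (Lmun nn μ (((2 : ℂ)⁻¹) • (a * b + b * a)))
          (Lmun nn μ (((2 * Complex.I)⁻¹) • (a * b - b * a)))
        ≤ ENNReal.ofReal (max (N / M) 2) *
            (ENNReal.ofReal ‖a‖ * Lmun nn μ b + ENNReal.ofReal ‖b‖ * Lmun nn μ a) := by
  intro a b ha hb _ _
  let : CStarAlgebra C(X, A) := {}
  exact max_le
    (Lmun_le_of_norm_apply_sub_le hnn.1 hM hMN μ (norm_jordan_apply_sub_le a b)
      (hμ.norm_jordan_sub_apply_smul_one_le ha hb))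
    (Lmun_le_of_norm_apply_sub_le hnn.1 hM hMN μ (norm_lie_apply_sub_le a b)
      (hμ.norm_lie_sub_apply_smul_one_le ha hb))

/-- `L^{(n),μ}` is `(max{N/M, 2}, 0)`-quasi-Leibniz on self-adjoint
elements with finite seminorm. -/
theorem statement3
    (X : Type*) [MetricSpace X] [CompactSpace X]
    (A : Type*) [NormedRing A] [StarRing A] [CStarRing A]
      [NormedAlgebra ℂ A] [StarModule ℂ A] [CompleteSpace A]
    (nn : A → ℝ) (hnn : IsNormOn A nn) (M N : ℝ) (hM : 0 < M) (hN : 0 < N)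
    (hMN : ∀ x : A, M * nn x ≤ ‖x‖ ∧ ‖x‖ ≤ N * nn x)
    (μ : C(X, A) →L[ℂ] ℂ) (hμ : IsState μ) :
    ∀ a b : C(X, A), IsSelfAdjoint a → IsSelfAdjoint b →
      Lmun nn μ a < ⊤ → Lmun nn μ b < ⊤ →
      max (Lmun nn μ (((2 : ℂ)⁻¹) • (a * b + b * a)))
          (Lmun nn μ (((2 * Complex.I)⁻¹) • (a * b - b * a)))
        ≤ ENNReal.ofReal (max (N / M) 2) *
            (ENNReal.ofReal ‖a‖ * Lmun nn μ b + ENNReal.ofReal ‖b‖ * Lmun nn μ a) :=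
  statement3_general X A nn hnn M N hM hMN μ hμ
end

section
/- Let (X, d_X) be a compact metric space, A a unital C*-algebra, and ‖·‖_n a norm on A equivalent to the C*-norm. Then each of the functions L^{(n),C(X)}, L^{(n),ℂ}, and L^{(n),μ} (for any state μ on C(X,A)), viewed as a [0,∞]-valued function on C(X,A), is lower semicontinuous with respect to the supremum norm of C(X,A). -/
open scoped ENNReal

/-! The Lipschitz term `lipn nn` is a supremum of functions `a ↦ nn (a x - a y) / d(x, y)`, which
are continuous in the supremum norm because `nn`, being subadditive and dominated by a multiple
of the C*-norm, is Lipschitz; so it is lower semicontinuous. The other term of each seminorm is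
continuous: the two quotient norms are distances to a set, and `a ↦ a - μ a • 1` is continuous. -/

theorem LipschitzWith.of_subadditive_of_le_mul_norm {E : Type*} [SeminormedAddCommGroup E]
    {f : E → ℝ} {K : ℝ} (hadd : ∀ x y, f (x + y) ≤ f x + f y) (hle : ∀ x, f x ≤ K * ‖x‖) :
    LipschitzWith K.toNNReal f :=
  LipschitzWith.of_le_add_mul' K fun x y =>
    calc f x = f (x - y + y) := by rw [sub_add_cancel]
      _ ≤ f (x - y) + f y := hadd _ _
      _ ≤ f y + K * dist x y := by rw [dist_eq_norm]; linarith [hle (x - y)]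

theorem IsNormOn.continuous_of_mul_le_norm {A : Type*} [NormedRing A] [NormedAlgebra ℂ A]
    {nn : A → ℝ} (hnn : IsNormOn A nn) {M : ℝ} (hM : 0 < M) (hle : ∀ x, M * nn x ≤ ‖x‖) :
    Continuous nn :=
  (LipschitzWith.of_subadditive_of_le_mul_norm hnn.2.2.1
    fun x => (le_inv_mul_iff₀ hM).mpr (hle x)).continuous

theorem lipschitzWith_one_iInf_dist {α ι : Type*} [PseudoMetricSpace α] [Nonempty ι]
    (b : ι → α) : LipschitzWith 1 fun a => ⨅ i, dist a (b i) := by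
  refine LipschitzWith.of_le_add fun a a' => ?_
  rw [← sub_le_iff_le_add]
  refine le_ciInf fun i => sub_le_iff_le_add.mpr ?_
  calc ⨅ i, dist a (b i) ≤ dist a (b i) := ciInf_le ⟨0, by rintro _ ⟨j, rfl⟩; positivity⟩ i
    _ ≤ dist a a' + dist a' (b i) := dist_triangle _ _ _
    _ = dist a' (b i) + dist a a' := add_comm _ _

section

variable {X : Type*} [MetricSpace X] {A : Type*} [NormedRing A]

theorem lowerSemicontinuous_lipn {nn : A → ℝ} (hnn : Continuous nn) :
    LowerSemicontinuous (lipn (X := X) nn) :=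
  lowerSemicontinuous_iSup fun p => lowerSemicontinuous_iSup fun _ =>
    (ENNReal.continuous_ofReal.comp
      ((hnn.comp ((continuous_eval_const p.1).sub (continuous_eval_const p.2))).div_const
        _)).lowerSemicontinuous

variable [CompactSpace X] [NormedAlgebra ℂ A]

theorem quotCXA_eq_iInf_dist (a : C(X, A)) :
    quotCXA a = ⨅ b : {b : C(X, A) // ∀ x, ∃ c : ℂ, b x = c • (1 : A)}, dist a b := by
  rw [quotCXA, iInf]
  congr 1
  ext r
  simp [dist_eq_norm, eq_comm]

theorem continuous_quotCXA : Continuous (quotCXA (X := X) (A := A)) := by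
  have : Nonempty {b : C(X, A) // ∀ x, ∃ c : ℂ, b x = c • (1 : A)} :=
    ⟨⟨0, fun _ => ⟨0, by simp⟩⟩⟩
  rw [funext quotCXA_eq_iInf_dist]
  exact (lipschitzWith_one_iInf_dist _).continuous

theorem continuous_quotC : Continuous (quotC (X := X) (A := A)) := by
  have := (lipschitzWith_one_iInf_dist fun c : ℂ => c • (1 : C(X, A))).continuous
  simp only [dist_eq_norm] at this
  exact this

end

theorem statement4_general
    (X : Type*) [MetricSpace X] [CompactSpace X]
    (A : Type*) [NormedRing A] [StarRing A] [CStarRing A]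
      [NormedAlgebra ℂ A]
    (nn : A → ℝ) (hnn : IsNormOn A nn) (M N : ℝ) (hM : 0 < M)
    (hMN : ∀ x : A, M * nn x ≤ ‖x‖ ∧ ‖x‖ ≤ N * nn x) :
    LowerSemicontinuous (LCXn (X := X) nn) ∧
    LowerSemicontinuous (LCn (X := X) nn) ∧
    ∀ μ : C(X, A) →L[ℂ] ℂ, IsState μ → LowerSemicontinuous (Lmun nn μ) := by
  have hcont : Continuous nn := hnn.continuous_of_mul_le_norm hM fun x => (hMN x).1
  have hmax : ∀ g : C(X, A) → ℝ, Continuous g →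
      LowerSemicontinuous fun a => max (lipn nn a) (ENNReal.ofReal (g a)) := fun _ hg =>
    (lowerSemicontinuous_lipn hcont).sup (ENNReal.continuous_ofReal.comp hg).lowerSemicontinuous
  exact ⟨hmax _ continuous_quotCXA, hmax _ continuous_quotC, fun μ _ => hmax _ (by fun_prop)⟩

/-- lower semicontinuity of `L^{(n),C(X)}`, `L^{(n),ℂ}` and `L^{(n),μ}`
with respect to the supremum norm on `C(X,A)`. -/
theorem statement4
    (X : Type*) [MetricSpace X] [CompactSpace X]
    (A : Type*) [NormedRing A] [StarRing A] [CStarRing A]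
      [NormedAlgebra ℂ A] [StarModule ℂ A] [CompleteSpace A]
    (nn : A → ℝ) (hnn : IsNormOn A nn) (M N : ℝ) (hM : 0 < M) (hN : 0 < N)
    (hMN : ∀ x : A, M * nn x ≤ ‖x‖ ∧ ‖x‖ ≤ N * nn x) :
    LowerSemicontinuous (LCXn (X := X) nn) ∧
    LowerSemicontinuous (LCn (X := X) nn) ∧
    ∀ μ : C(X, A) →L[ℂ] ℂ, IsState μ → LowerSemicontinuous (Lmun nn μ) :=
  statement4_general X A nn hnn M N hM hMN
end

section
/- Let (X, d_X) be a compact metric space, A a unital C*-algebra, and ‖·‖_n a norm on A with constants M, N > 0 satisfying M‖·‖_n ≤ ‖·‖_A ≤ N‖·‖_n. Then for all states φ, ψ on C(X,A), mk_{L^{(n),C(X)}}(φ,ψ) ≤ 2 + N·diam(X, d_X). Moreover, if A = ℂ, then mk_{L^{(n),C(X)}}(φ,ψ) ≤ N·diam(X, d_X) for all states φ, ψ. -/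
open scoped ENNReal

/-! For self-adjoint `a` with `L(a) ≤ 1` and any `b` with values in `ℂ1_A`, points of the real
spectra of `a(x₁)` and `a(x₂)` are at most `‖a(x₁) - a(x₂)‖ + 2‖a(x₂) - b(x₂)‖` apart, so all these
spectra lie in one interval of length `N·diam X + 2‖a - b‖`. Hence `a` is within half that length
of a real multiple of `1`; two states agree on scalars and have norm at most one on self-adjoint
elements, so they differ on `a` by at most the length of the interval. Taking the infimum over `b`
gives `2 + N·diam X`; when `A = ℂ` one can take `b = a`. -/

theorem exists_forall_abs_sub_le_half {s : Set ℝ} {δ : ℝ} (h : ∀ x ∈ s, ∀ y ∈ s, x - y ≤ δ) :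
    ∃ c, ∀ x ∈ s, |x - c| ≤ δ / 2 := by
  rcases s.eq_empty_or_nonempty with rfl | ⟨x₀, hx₀⟩
  · simp
  have hbddA : BddAbove s := ⟨x₀ + δ, fun x hx => by linarith [h x hx x₀ hx₀]⟩
  have hbddB : BddBelow s := ⟨x₀ - δ, fun y hy => by linarith [h x₀ hx₀ y hy]⟩
  have hspread : sSup s - sInf s ≤ δ := by
    have : sSup s ≤ sInf s + δ := csSup_le ⟨x₀, hx₀⟩ fun x hx => by
      linarith [le_csInf ⟨x₀, hx₀⟩ fun y hy => show x - δ ≤ y by linarith [h x hx y hy]]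
    linarith
  refine ⟨(sSup s + sInf s) / 2, fun x hx => abs_le.mpr ⟨?_, ?_⟩⟩
  · linarith [le_csSup hbddA hx, csInf_le hbddB hx]
  · linarith [le_csSup hbddA hx, csInf_le hbddB hx]

theorem spectrum.norm_sub_le_of_mem {𝕜 A : Type*} [NormedField 𝕜] [NormedRing A] [NormedAlgebra 𝕜 A]
    [CompleteSpace A] [NormOneClass A] {u v : A} {z w : 𝕜} (hz : z ∈ spectrum 𝕜 u)
    (hw : w ∈ spectrum 𝕜 v) (c : 𝕜) :
    ‖z - w‖ ≤ ‖u - v‖ + 2 * ‖v - algebraMap 𝕜 A c‖ := by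
  have shift : ∀ {y : 𝕜} {t : A}, y ∈ spectrum 𝕜 t → ‖y - c‖ ≤ ‖t - algebraMap 𝕜 A c‖ :=
    fun hy => spectrum.norm_le_norm_of_mem <| by
      rw [← spectrum.sub_singleton_eq]; exact Set.sub_mem_sub hy rfl
  calc ‖z - w‖ ≤ ‖z - c‖ + ‖w - c‖ := by
        simpa only [dist_eq_norm] using dist_triangle_right z w c
    _ ≤ ‖u - algebraMap 𝕜 A c‖ + ‖v - algebraMap 𝕜 A c‖ := add_le_add (shift hz) (shift hw)
    _ ≤ ‖u - v‖ + ‖v - algebraMap 𝕜 A c‖ + ‖v - algebraMap 𝕜 A c‖ := by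
        gcongr
        exact norm_sub_le_norm_sub_add_norm_sub _ _ _
    _ = ‖u - v‖ + 2 * ‖v - algebraMap 𝕜 A c‖ := by ring

theorem IsSelfAdjoint.norm_sub_algebraMap_le {A : Type*} [CStarAlgebra A] {h : A}
    (hh : IsSelfAdjoint h) {c r : ℝ} (hr : 0 ≤ r) (hspec : ∀ t ∈ spectrum ℝ h, |t - c| ≤ r) :
    ‖h - algebraMap ℝ A c‖ ≤ r := by
  rcases subsingleton_or_nontrivial A with hA | hA
  · simpa [Subsingleton.elim (h - algebraMap ℝ A c) 0] using hr
  have hsa : IsSelfAdjoint (h - algebraMap ℝ A c) := hh.sub (.algebraMap A (.all c))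
  have mem : ∀ t ∈ spectrum ℝ (h - algebraMap ℝ A c), |t| ≤ r := by
    rw [← spectrum.sub_singleton_eq]
    rintro _ ⟨t, ht, _, rfl, rfl⟩
    exact hspec t ht
  rcases CStarAlgebra.norm_or_neg_norm_mem_spectrum hsa with hmem | hmem
  · simpa using mem _ hmem
  · simpa using mem _ hmem

section States

variable {B : Type*} [CStarAlgebra B] {φ ψ : B →L[ℂ] ℂ}

theorem IsState.apply_algebraMap_s8 (hφ : IsState φ) (r : ℝ) : φ (algebraMap ℝ B r) = r := by
  rw [Algebra.algebraMap_eq_smul_one, φ.map_smul_of_tower, hφ.1, Complex.real_smul, mul_one]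

theorem IsState.re_apply_le_norm (hφ : IsState φ) {h : B} (hh : IsSelfAdjoint h) :
    (φ h).re ≤ ‖h‖ ∧ (φ h).im = 0 := by
  let _ := CStarAlgebra.spectralOrder B
  have := CStarAlgebra.spectralOrderedRing B
  obtain ⟨g, hg⟩ := CStarAlgebra.nonneg_iff_eq_star_mul_self.mp
    (sub_nonneg.mpr hh.le_algebraMap_norm_self)
  have hpos := hφ.2 g
  rw [← hg, map_sub, hφ.apply_algebraMap_s8] at hpos
  simp only [Complex.sub_re, Complex.ofReal_re, Complex.sub_im, Complex.ofReal_im] at hpos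
  constructor <;> linarith [hpos.1, hpos.2]

theorem IsState.norm_apply_le_s8 (hφ : IsState φ) {h : B} (hh : IsSelfAdjoint h) :
    ‖φ h‖ ≤ ‖h‖ := by
  obtain ⟨hle, him⟩ := hφ.re_apply_le_norm hh
  obtain ⟨hle', -⟩ := hφ.re_apply_le_norm hh.neg
  rw [map_neg, Complex.neg_re, norm_neg] at hle'
  rw [← Complex.re_add_im (φ h), him, Complex.ofReal_zero, zero_mul, add_zero,
    Complex.norm_real, Real.norm_eq_abs, abs_le]
  constructor <;> linarith

theorem IsState.norm_sub_apply_le (hφ : IsState φ) (hψ : IsState ψ) {a : B}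
    (ha : IsSelfAdjoint a) (c : ℝ) : ‖φ a - ψ a‖ ≤ 2 * ‖a - algebraMap ℝ B c‖ := by
  have hsa : IsSelfAdjoint (a - algebraMap ℝ B c) := ha.sub (.algebraMap B (.all c))
  calc ‖φ a - ψ a‖ = ‖φ (a - algebraMap ℝ B c) - ψ (a - algebraMap ℝ B c)‖ := by
        simp only [map_sub, hφ.apply_algebraMap_s8, hψ.apply_algebraMap_s8, sub_sub_sub_cancel_right]
    _ ≤ ‖a - algebraMap ℝ B c‖ + ‖a - algebraMap ℝ B c‖ :=
        (norm_sub_le _ _).trans (add_le_add (hφ.norm_apply_le_s8 hsa) (hψ.norm_apply_le_s8 hsa))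
    _ = 2 * ‖a - algebraMap ℝ B c‖ := by ring

end States

theorem ContinuousMap.exists_norm_sub_algebraMap_le {X A : Type*} [TopologicalSpace X]
    [CompactSpace X] [CStarAlgebra A] {a b : C(X, A)} (ha : IsSelfAdjoint a) {δ : ℝ} (hδ : 0 ≤ δ)
    (hosc : ∀ x y, ‖a x - a y‖ ≤ δ) (hb : ∀ x, ∃ c : ℂ, b x = c • (1 : A)) :
    ∃ c₀ : ℝ, ‖a - algebraMap ℝ C(X, A) c₀‖ ≤ δ / 2 + ‖a - b‖ := by
  have hsa : ∀ x, IsSelfAdjoint (a x) := fun x => by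
    simpa [IsSelfAdjoint] using congrArg (· x) ha.star_eq
  have spread : ∀ t₁ ∈ ⋃ x, spectrum ℝ (a x), ∀ t₂ ∈ ⋃ x, spectrum ℝ (a x),
      t₁ - t₂ ≤ δ + 2 * ‖a - b‖ := by
    simp only [Set.mem_iUnion]
    rintro t₁ ⟨x₁, ht₁⟩ t₂ ⟨x₂, ht₂⟩
    have : Nontrivial A := (subsingleton_or_nontrivial A).resolve_left fun _ => by
      simp [spectrum.of_subsingleton] at ht₁
    obtain ⟨c, hc⟩ := hb x₂
    have hfar := spectrum.norm_sub_le_of_mem ((spectrum.algebraMap_mem_iff ℂ).mpr ht₁)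
      ((spectrum.algebraMap_mem_iff ℂ).mpr ht₂) c
    have hnear : ‖a x₂ - algebraMap ℂ A c‖ ≤ ‖a - b‖ := by
      simpa [Algebra.algebraMap_eq_smul_one, hc] using (a - b).norm_coe_le_norm x₂
    rw [← map_sub, Complex.coe_algebraMap, Complex.norm_real, Real.norm_eq_abs] at hfar
    linarith [le_abs_self (t₁ - t₂), hosc x₁ x₂]
  obtain ⟨c₀, hc₀⟩ := exists_forall_abs_sub_le_half spread
  refine ⟨c₀, (ContinuousMap.norm_le _ (by positivity)).mpr fun x => ?_⟩
  have hr : (δ + 2 * ‖a - b‖) / 2 = δ / 2 + ‖a - b‖ := by ring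
  simpa [hr, Algebra.algebraMap_eq_smul_one] using (hsa x).norm_sub_algebraMap_le (by positivity)
    fun t ht => hc₀ t (Set.mem_iUnion_of_mem x ht)

section Seminorms

variable {X : Type*} [MetricSpace X] {A : Type*} [NormedRing A]

theorem nn_sub_le_dist_of_lipn_le_one {nn : A → ℝ} {a : C(X, A)} (hlip : lipn nn a ≤ 1)
    {x y : X} (hxy : x ≠ y) : nn (a x - a y) ≤ dist x y := by
  have hquot : ENNReal.ofReal (nn (a x - a y) / dist x y) ≤ 1 :=
    le_trans (le_iSup₂ (f := fun (p : X × X) (_ : p.1 ≠ p.2) =>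
      ENNReal.ofReal (nn (a p.1 - a p.2) / dist p.1 p.2)) (x, y) hxy) hlip
  rwa [ENNReal.ofReal_le_one, div_le_one (dist_pos.mpr hxy)] at hquot

theorem norm_sub_le_mul_diam_of_lipn_le_one [BoundedSpace X] {nn : A → ℝ} {N : ℝ}
    (hN : 0 ≤ N) (hnorm : ∀ v : A, ‖v‖ ≤ N * nn v) {a : C(X, A)} (hlip : lipn nn a ≤ 1)
    (x y : X) : ‖a x - a y‖ ≤ N * Metric.diam (Set.univ : Set X) := by
  rcases eq_or_ne x y with rfl | hxy
  · simpa using mul_nonneg hN Metric.diam_nonneg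
  calc ‖a x - a y‖ ≤ N * nn (a x - a y) := hnorm _
    _ ≤ N * dist x y := by gcongr; exact nn_sub_le_dist_of_lipn_le_one hlip hxy
    _ ≤ N * Metric.diam (Set.univ : Set X) := by
        gcongr; exact Metric.dist_le_diam_of_mem (Bornology.isBounded_univ.mpr ‹_›) trivial trivial

theorem le_quotCXA_of_forall_le [CompactSpace X] [NormedAlgebra ℂ A] {a : C(X, A)} {t : ℝ}
    (h : ∀ b : C(X, A), (∀ x, ∃ c : ℂ, b x = c • (1 : A)) → t ≤ ‖a - b‖) : t ≤ quotCXA a :=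
  le_csInf ⟨_, 0, fun _ => ⟨0, by simp⟩, rfl⟩ fun _ ⟨b, hb, hr⟩ => hr ▸ h b hb

end Seminorms

theorem mkDist_le_ofReal {B : Type*} [NormedRing B] [NormedAlgebra ℂ B] [StarRing B]
    {L : B → ℝ≥0∞} {φ ψ : B →L[ℂ] ℂ} {r : ℝ}
    (h : ∀ a, IsSelfAdjoint a → L a ≤ 1 → ‖φ a - ψ a‖ ≤ r) : mkDist L φ ψ ≤ ENNReal.ofReal r :=
  iSup₂_le fun a ha => ENNReal.ofReal_le_ofReal (h a ha.1 ha.2)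

theorem IsState.norm_sub_apply_le_of_lipn_le_one {X A : Type*} [MetricSpace X] [CompactSpace X]
    [CStarAlgebra A] {nn : A → ℝ} {N : ℝ} (hN : 0 ≤ N) (hnorm : ∀ v : A, ‖v‖ ≤ N * nn v)
    {φ ψ : C(X, A) →L[ℂ] ℂ} (hφ : IsState φ) (hψ : IsState ψ) {a b : C(X, A)}
    (ha : IsSelfAdjoint a) (hlip : lipn nn a ≤ 1) (hb : ∀ x, ∃ c : ℂ, b x = c • (1 : A)) :
    ‖φ a - ψ a‖ ≤ N * Metric.diam (Set.univ : Set X) + 2 * ‖a - b‖ := by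
  obtain ⟨c₀, hc₀⟩ := ContinuousMap.exists_norm_sub_algebraMap_le ha
    (mul_nonneg hN Metric.diam_nonneg) (norm_sub_le_mul_diam_of_lipn_le_one hN hnorm hlip) hb
  calc ‖φ a - ψ a‖ ≤ 2 * ‖a - algebraMap ℝ C(X, A) c₀‖ := hφ.norm_sub_apply_le hψ ha c₀
    _ ≤ N * Metric.diam (Set.univ : Set X) + 2 * ‖a - b‖ := by linarith

theorem statement8_general
    (X : Type*) [MetricSpace X] [CompactSpace X]
    (A : Type*) [NormedRing A] [StarRing A] [CStarRing A]
      [NormedAlgebra ℂ A] [StarModule ℂ A] [CompleteSpace A]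
    (nn : A → ℝ) (M N : ℝ) (hN : 0 < N)
    (hMN : ∀ x : A, M * nn x ≤ ‖x‖ ∧ ‖x‖ ≤ N * nn x) :
    (∀ φ ψ : C(X, A) →L[ℂ] ℂ, IsState φ → IsState ψ →
      mkDist (LCXn nn) φ ψ
        ≤ ENNReal.ofReal (2 + N * Metric.diam (Set.univ : Set X))) ∧
    (∀ nn' : ℂ → ℝ, IsNormOn ℂ nn' → ∀ M' N' : ℝ, 0 < M' → 0 < N' →
      (∀ z : ℂ, M' * nn' z ≤ ‖z‖ ∧ ‖z‖ ≤ N' * nn' z) →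
      ∀ φ ψ : C(X, ℂ) →L[ℂ] ℂ, IsState φ → IsState ψ →
        mkDist (LCXn nn') φ ψ
          ≤ ENNReal.ofReal (N' * Metric.diam (Set.univ : Set X))) := by
  let _ : CStarAlgebra A := {}
  refine ⟨fun φ ψ hφ hψ => mkDist_le_ofReal fun a ha hL => ?_,
    fun nn' _ M' N' _ hN' hMN' φ ψ hφ hψ => mkDist_le_ofReal fun a ha hL => ?_⟩
  · obtain ⟨hlip, hquot⟩ := max_le_iff.mp hL
    have key := fun b => hφ.norm_sub_apply_le_of_lipn_le_one hN.le (fun v => (hMN v).2) hψ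
      (b := b) ha hlip
    have : (‖φ a - ψ a‖ - N * Metric.diam (Set.univ : Set X)) / 2 ≤ quotCXA a :=
      le_quotCXA_of_forall_le fun b hb => by linarith [key b hb]
    linarith [ENNReal.ofReal_le_one.mp hquot]
  · simpa using hφ.norm_sub_apply_le_of_lipn_le_one hN'.le (fun z => (hMN' z).2) hψ ha
      (max_le_iff.mp hL).1 (b := a) fun x => ⟨a x, by simp⟩

/-- the Monge–Kantorovich metric of `L^{(n),C(X)}` is bounded by
`2 + N·diam(X)`; and by `N·diam(X)` when `A = ℂ`. -/
theorem statement8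
    (X : Type*) [MetricSpace X] [CompactSpace X]
    (A : Type*) [NormedRing A] [StarRing A] [CStarRing A]
      [NormedAlgebra ℂ A] [StarModule ℂ A] [CompleteSpace A]
    (nn : A → ℝ) (hnn : IsNormOn A nn) (M N : ℝ) (hM : 0 < M) (hN : 0 < N)
    (hMN : ∀ x : A, M * nn x ≤ ‖x‖ ∧ ‖x‖ ≤ N * nn x) :
    (∀ φ ψ : C(X, A) →L[ℂ] ℂ, IsState φ → IsState ψ →
      mkDist (LCXn nn) φ ψ
        ≤ ENNReal.ofReal (2 + N * Metric.diam (Set.univ : Set X))) ∧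
    (∀ nn' : ℂ → ℝ, IsNormOn ℂ nn' → ∀ M' N' : ℝ, 0 < M' → 0 < N' →
      (∀ z : ℂ, M' * nn' z ≤ ‖z‖ ∧ ‖z‖ ≤ N' * nn' z) →
      ∀ φ ψ : C(X, ℂ) →L[ℂ] ℂ, IsState φ → IsState ψ →
        mkDist (LCXn nn') φ ψ
          ≤ ENNReal.ofReal (N' * Metric.diam (Set.univ : Set X))) :=
  statement8_general X A nn M N hN hMN
end

section
/- Let (X, d_X) be a compact metric space and A = ⊕_{k=0}^n M_{m_k}(ℂ). Let μ be a state on A and define μ_x : C(X,A) → ℂ by μ_x(a) = μ(a(x)), so μ_x is a state on C(X,A), and let Δ_μ : X → S(C(X,A)) be x ↦ μ_x. Then: (1) Δ_μ is a homeomorphism onto its image when S(C(X,A)) carries the weak-* topology; (2) for any norm ‖·‖_𝗇 on A with constants M, N > 0 satisfying M‖·‖_𝗇 ≤ ‖·‖_A ≤ N‖·‖_𝗇, any choice q ∈ {C(X), ℂ, ν} (ν a state on C(X,A)), and all x, y ∈ X, mk_{L^{(𝗇),q}}(μ_x, μ_y) ≤ N·k_μ·d_X(x,y), where k_μ = Σ_{k=0}^n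 Σ_{p,q=1}^{m_k} |μ(e_{k,(p,q)})|. -/
open scoped ENNReal
set_option synthInstance.maxHeartbeats 1000000
set_option maxHeartbeats 1000000

open scoped Matrix.Norms.L2Operator

section MatrixDefs

variable {n : ℕ} {m : Fin (n + 1) → ℕ}

/-- The matrix unit `e_{k,(p,q)}` of `⊕_k M_{m_k}(ℂ)`. -/
noncomputable def matUnit (k : Fin (n + 1)) (p q : Fin (m k)) :
    Π j : Fin (n + 1), Matrix (Fin (m j)) (Fin (m j)) ℂ :=
  Pi.single k (Matrix.single p q 1)

/-- The constant `k_μ = Σ_k Σ_{p,q} |μ(e_{k,(p,q)})|` associated to a state `μ`. -/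
noncomputable def kConst
    (μ : (Π j : Fin (n + 1), Matrix (Fin (m j)) (Fin (m j)) ℂ) →L[ℂ] ℂ) : ℝ :=
  ∑ k : Fin (n + 1), ∑ p : Fin (m k), ∑ q : Fin (m k), ‖μ (matUnit k p q)‖

/-- The functional `μ_x : a ↦ μ (a x)` on `C(X, ⊕_k M_{m_k}(ℂ))`. -/
noncomputable def stateAt {X : Type*} [MetricSpace X] [CompactSpace X]
    (μ : (Π j : Fin (n + 1), Matrix (Fin (m j)) (Fin (m j)) ℂ) →L[ℂ] ℂ) (x : X) :
    C(X, Π j : Fin (n + 1), Matrix (Fin (m j)) (Fin (m j)) ℂ) →L[ℂ] ℂ :=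
  μ.comp (ContinuousMap.evalCLM ℂ x)

/-- The tracial state `tr_v = ⊕_k v_k tr_{m_k}` on `⊕_k M_{m_k}(ℂ)`. -/
noncomputable def trV (v : Fin (n + 1) → ℝ) :
    (Π j : Fin (n + 1), Matrix (Fin (m j)) (Fin (m j)) ℂ) →L[ℂ] ℂ :=
  LinearMap.toContinuousLinearMap
    { toFun := fun a => ∑ k : Fin (n + 1), ((v k : ℂ) / (m k : ℂ)) * (a k).trace
      map_add' := by
        intro a b
        simp [Matrix.trace_add, mul_add, Finset.sum_add_distrib]
      map_smul' := by
        intro c a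
        simp only [Pi.smul_apply, Matrix.trace_smul, smul_eq_mul, RingHom.id_apply,
          Finset.mul_sum]
        exact Finset.sum_congr rfl fun k _ => by ring }

end MatrixDefs

/-!
Evaluating at a point is a unital `*`-homomorphism `C(X, A) → A`, so `μ_x = μ ∘ ev_x` is a state,
and `x ↦ μ_x` is weak-* continuous. It is injective because `μ_x` sends `z ↦ d(z, y) • 1` to
`d(x, y)`, hence a closed embedding, `X` being compact. For the Lipschitz bound, expand
`b ∈ A` in the matrix units: each entry of a matrix is bounded by its operator norm, so
`|μ b| ≤ k_μ ‖b‖`, and then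
`|μ_x a - μ_y a| ≤ k_μ ‖a x - a y‖ ≤ N k_μ ‖a x - a y‖_𝗇 ≤ N k_μ d(x, y)`
whenever `l^{(𝗇)}(a) ≤ 1`, which holds for each of the three seminorms once `L(a) ≤ 1`.
-/

theorem Matrix.norm_entry_le_l2_opNorm {𝕜 ι κ : Type*} [RCLike 𝕜] [Fintype ι] [Fintype κ]
    [DecidableEq κ] (M : Matrix ι κ 𝕜) (i : ι) (j : κ) : ‖M i j‖ ≤ ‖M‖ :=
  calc ‖M i j‖ ≤ ‖(EuclideanSpace.equiv ι 𝕜).symm (M.mulVec (EuclideanSpace.single j 1))‖ := by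
        simpa [Matrix.mulVec, dotProduct] using PiLp.norm_apply_le
          ((EuclideanSpace.equiv ι 𝕜).symm (M.mulVec (EuclideanSpace.single j 1))) i
    _ ≤ ‖M‖ * ‖EuclideanSpace.single j (1 : 𝕜)‖ := M.l2_opNorm_mulVec _
    _ = ‖M‖ := by simp

section MatrixSum

variable {n : ℕ} {m : Fin (n + 1) → ℕ}

theorem sum_entry_smul_matUnit (b : Π j : Fin (n + 1), Matrix (Fin (m j)) (Fin (m j)) ℂ) :
    ∑ k, ∑ p, ∑ q, b k p q • matUnit k p q = b := by
  conv_rhs => rw [← Finset.univ_sum_single b]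
  refine Finset.sum_congr rfl fun k _ => ?_
  conv_rhs => rw [Matrix.matrix_eq_sum_single (b k)]
  simp only [matUnit, ← LinearMap.single_apply ℂ, ← map_smul, ← map_sum, Matrix.smul_single,
    smul_eq_mul, mul_one]

theorem norm_le_kConst_mul_norm
    (μ : (Π j : Fin (n + 1), Matrix (Fin (m j)) (Fin (m j)) ℂ) →L[ℂ] ℂ)
    (b : Π j : Fin (n + 1), Matrix (Fin (m j)) (Fin (m j)) ℂ) :
    ‖μ b‖ ≤ kConst μ * ‖b‖ := by
  conv_lhs => rw [← sum_entry_smul_matUnit b]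
  simp only [map_sum, map_smul, smul_eq_mul, kConst, Finset.sum_mul]
  refine (norm_sum_le _ _).trans <| Finset.sum_le_sum fun k _ => (norm_sum_le _ _).trans <|
    Finset.sum_le_sum fun p _ => (norm_sum_le _ _).trans <| Finset.sum_le_sum fun q _ => ?_
  rw [norm_mul, mul_comm]
  gcongr
  exact (Matrix.norm_entry_le_l2_opNorm (b k) p q).trans (norm_le_pi_norm b k)

end MatrixSum

theorem IsState.comp_evalCLM {X A : Type*} [TopologicalSpace X] [CompactSpace X] [NormedRing A]
    [NormedAlgebra ℂ A] [StarRing A] [ContinuousStar A] {μ : A →L[ℂ] ℂ} (hμ : IsState μ) (x : X) :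
    IsState (μ.comp (ContinuousMap.evalCLM ℂ x)) :=
  ⟨hμ.1, fun b => hμ.2 (b x)⟩

theorem isEmbedding_toWeakDual_comp_evalCLM {X A : Type*} [MetricSpace X] [CompactSpace X]
    [NormedRing A] [NormedAlgebra ℂ A] {μ : A →L[ℂ] ℂ} (hμ : μ 1 = 1) :
    Topology.IsEmbedding fun x : X =>
      StrongDual.toWeakDual (μ.comp (ContinuousMap.evalCLM ℂ x)) := by
  have hcont : Continuous fun x : X =>
      StrongDual.toWeakDual (μ.comp (ContinuousMap.evalCLM ℂ x)) :=
    WeakDual.continuous_of_continuous_eval fun a => μ.continuous.comp a.continuous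
  refine (hcont.isClosedEmbedding fun x y hxy => ?_).isEmbedding
  let g : C(X, A) := ⟨fun z => (dist z y : ℂ) • (1 : A), by fun_prop⟩
  have hg : ((dist x y : ℝ) : ℂ) = ((dist y y : ℝ) : ℂ) := by
    simpa [g, map_smul, hμ] using DFunLike.congr_fun hxy g
  simpa using hg

theorem le_dist_of_lipn_le_one {X A : Type*} [MetricSpace X] [CompactSpace X] [NormedRing A]
    [StarRing A] [CStarRing A] [NormedAlgebra ℂ A] [StarModule ℂ A] [CompleteSpace A]
    {nn : A → ℝ} (h0 : nn 0 = 0) {a : C(X, A)} (ha : lipn nn a ≤ 1) (x y : X) :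
    nn (a x - a y) ≤ dist x y := by
  rcases eq_or_ne x y with rfl | hxy
  · simp [h0]
  have hle : ENNReal.ofReal (nn (a x - a y) / dist x y) ≤ 1 :=
    le_trans (le_iSup₂ (f := fun (p : X × X) (_ : p.1 ≠ p.2) =>
      ENNReal.ofReal (nn (a p.1 - a p.2) / dist p.1 p.2)) (x, y) hxy) ha
  rwa [ENNReal.ofReal_le_one, div_le_one (dist_pos.mpr hxy)] at hle

theorem norm_stateAt_sub_le {X : Type*} [MetricSpace X] [CompactSpace X] {n : ℕ}
    {m : Fin (n + 1) → ℕ} (μ : (Π j : Fin (n + 1), Matrix (Fin (m j)) (Fin (m j)) ℂ) →L[ℂ] ℂ)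
    {nn : (Π j : Fin (n + 1), Matrix (Fin (m j)) (Fin (m j)) ℂ) → ℝ} (h0 : nn 0 = 0) {N : ℝ}
    (hN : 0 ≤ N) (hnorm : ∀ b, ‖b‖ ≤ N * nn b)
    {a : C(X, Π j : Fin (n + 1), Matrix (Fin (m j)) (Fin (m j)) ℂ)} (ha : lipn nn a ≤ 1)
    (x y : X) : ‖stateAt μ x a - stateAt μ y a‖ ≤ N * kConst μ * dist x y := by
  have hk : 0 ≤ kConst μ := by unfold kConst; positivity
  calc ‖stateAt μ x a - stateAt μ y a‖ = ‖μ (a x - a y)‖ := by rw [map_sub]; rfl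
    _ ≤ kConst μ * ‖a x - a y‖ := norm_le_kConst_mul_norm μ _
    _ ≤ kConst μ * (N * nn (a x - a y)) := by gcongr; exact hnorm _
    _ ≤ kConst μ * (N * dist x y) := by gcongr; exact le_dist_of_lipn_le_one h0 ha x y
    _ = N * kConst μ * dist x y := by ring

theorem statement15_general
    (X : Type*) [MetricSpace X] [CompactSpace X]
    (n : ℕ) (m : Fin (n + 1) → ℕ)
    (μ : (Π j : Fin (n + 1), Matrix (Fin (m j)) (Fin (m j)) ℂ) →L[ℂ] ℂ)
    (hμ : IsState μ) :
    (∀ x : X, IsState (stateAt (X := X) μ x)) ∧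
    Topology.IsEmbedding
      (fun x : X => StrongDual.toWeakDual (stateAt (X := X) μ x)) ∧
    (∀ (nn : (Π j : Fin (n + 1), Matrix (Fin (m j)) (Fin (m j)) ℂ) → ℝ),
      IsNormOn _ nn → ∀ M N : ℝ, 0 < M → 0 < N →
      (∀ a, M * nn a ≤ ‖a‖ ∧ ‖a‖ ≤ N * nn a) →
      ∀ L : C(X, Π j : Fin (n + 1), Matrix (Fin (m j)) (Fin (m j)) ℂ) → ℝ≥0∞,
        (L = LCXn nn ∨ L = LCn nn ∨ ∃ ν, IsState ν ∧ L = Lmun nn ν) →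
        ∀ x y : X,
          mkDist L (stateAt μ x) (stateAt μ y)
            ≤ ENNReal.ofReal (N * kConst μ * dist x y)) := by
  refine ⟨hμ.comp_evalCLM, isEmbedding_toWeakDual_comp_evalCLM hμ.1, ?_⟩
  intro nn hnn _ N _ hN hMN L hL x y
  have hlip : ∀ a, L a ≤ 1 → lipn nn a ≤ 1 := by
    rcases hL with rfl | rfl | ⟨ν, -, rfl⟩ <;> exact fun a ha => (le_max_left _ _).trans ha
  exact iSup₂_le fun a ha => ENNReal.ofReal_le_ofReal <|
    norm_stateAt_sub_le μ ((hnn.2.1 0).mpr rfl) hN.le (fun b => (hMN b).2) (hlip a ha.2) x y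

/-- for a state `μ` on `A = ⊕_k M_{m_k}(ℂ)`, the map `Δ_μ : x ↦ μ_x`
lands in the state space of `C(X,A)`, is a homeomorphism onto its image for the
weak-* topology, and is `N·k_μ`-Lipschitz for the Monge–Kantorovich metric of any of
the seminorms `L^{(n),q}`. -/
theorem statement15
    (X : Type*) [MetricSpace X] [CompactSpace X]
    (n : ℕ) (m : Fin (n + 1) → ℕ) (hm : ∀ k, 0 < m k)
    (μ : (Π j : Fin (n + 1), Matrix (Fin (m j)) (Fin (m j)) ℂ) →L[ℂ] ℂ)
    (hμ : IsState μ) :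
    (∀ x : X, IsState (stateAt (X := X) μ x)) ∧
    Topology.IsEmbedding
      (fun x : X => StrongDual.toWeakDual (stateAt (X := X) μ x)) ∧
    (∀ (nn : (Π j : Fin (n + 1), Matrix (Fin (m j)) (Fin (m j)) ℂ) → ℝ),
      IsNormOn _ nn → ∀ M N : ℝ, 0 < M → 0 < N →
      (∀ a, M * nn a ≤ ‖a‖ ∧ ‖a‖ ≤ N * nn a) →
      ∀ L : C(X, Π j : Fin (n + 1), Matrix (Fin (m j)) (Fin (m j)) ℂ) → ℝ≥0∞,
        (L = LCXn nn ∨ L = LCn nn ∨ ∃ ν, IsState ν ∧ L = Lmun nn ν) →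
        ∀ x y : X,
          mkDist L (stateAt μ x) (stateAt μ y)
            ≤ ENNReal.ofReal (N * kConst μ * dist x y)) :=
  statement15_general X n m μ hμ
end

section
/- Let (X, d_X) be a compact metric space and A = ⊕_{k=0}^n M_{m_k}(ℂ). Let ‖·‖_𝗇 be a norm on A with constants M, N > 0 satisfying M‖·‖_𝗇 ≤ ‖·‖_A ≤ N‖·‖_𝗇, and let tr_v = ⊕_k v_k tr_{m_k} be the tracial state associated to v = (v_0,…,v_n) with v_k ∈ [0,1] and Σ v_k = 1. Then for the seminorm L^{(𝗇),C(X)} and all x, y ∈ X: M·d_X(x,y) ≤ mk_{L^{(𝗇),C(X)}}((tr_v)_x, (tr_v)_y) ≤ N·d_X(x,y). In particular the map x ↦ (tr_v)_x is bi-Lipschitz from (X, d_X) into the state space of C(X,A) with the Monge–Kantorovich metric. -/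
open scoped ENNReal
set_option synthInstance.maxHeartbeats 1000000
set_option maxHeartbeats 1000000

open scoped Matrix.Norms.L2Operator

/-!
Upper bound: `tr_v` is a convex combination of normalised traces, and `|tr_m a| ≤ ‖a‖` because
every diagonal entry of a matrix is bounded by its operator norm. Hence for `L(a) ≤ 1`,
`|tr_v (a x) - tr_v (a y)| ≤ ‖a x - a y‖ ≤ N ‖a x - a y‖_𝗇 ≤ N d(x, y)`.

Lower bound: test against `f z = M d(z, y) • 1`. It is self-adjoint and takes values in `ℂ1_A`,
so its quotient norm vanishes; it is `M`-Lipschitz into `ℂ1_A`, so its Lipschitz constant for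
`‖·‖_𝗇` is at most `M ‖1‖_𝗇 ≤ ‖1‖_A = 1`. Since `tr_v 1 = 1`, the states at `x` and `y` differ on
`f` by exactly `M d(x, y)`.
-/

namespace Matrix

variable {𝕜 : Type*} [RCLike 𝕜] {l n : Type*} [Fintype l] [Fintype n] [DecidableEq n]

theorem norm_entry_le_l2_opNorm_s16 (A : Matrix l n 𝕜) (i : l) (j : n) : ‖A i j‖ ≤ ‖A‖ :=
  calc ‖A i j‖ = ‖(EuclideanSpace.equiv l 𝕜).symm (A *ᵥ EuclideanSpace.single j 1) i‖ := by
        simp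
    _ ≤ ‖(EuclideanSpace.equiv l 𝕜).symm (A *ᵥ EuclideanSpace.single j 1)‖ :=
        PiLp.norm_apply_le _ i
    _ ≤ ‖A‖ * ‖EuclideanSpace.single j (1 : 𝕜)‖ := A.l2_opNorm_mulVec _
    _ = ‖A‖ := by simp

theorem norm_trace_le_card_mul_l2_opNorm (A : Matrix n n 𝕜) :
    ‖A.trace‖ ≤ Fintype.card n * ‖A‖ :=
  calc ‖A.trace‖ ≤ ∑ i, ‖A i i‖ := norm_sum_le _ _
    _ ≤ ∑ _i : n, ‖A‖ := Finset.sum_le_sum fun i _ => A.norm_entry_le_l2_opNorm_s16 i i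
    _ = Fintype.card n * ‖A‖ := by simp

end Matrix

section TracialState

variable {n : ℕ} {m : Fin (n + 1) → ℕ}

theorem trV_apply (v : Fin (n + 1) → ℝ)
    (a : Π j : Fin (n + 1), Matrix (Fin (m j)) (Fin (m j)) ℂ) :
    trV v a = ∑ k, ((v k : ℂ) / (m k : ℂ)) * (a k).trace := rfl

theorem trV_one (hm : ∀ k, 0 < m k) {v : Fin (n + 1) → ℝ} (hv1 : ∑ k, v k = 1) :
    trV (m := m) v 1 = 1 := by
  have hterm (k : Fin (n + 1)) :
      (v k : ℂ) / (m k : ℂ) * (1 : Matrix (Fin (m k)) (Fin (m k)) ℂ).trace = v k := by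
    have : (m k : ℂ) ≠ 0 := by exact_mod_cast (hm k).ne'
    rw [Matrix.trace_one, Fintype.card_fin]
    field_simp
  simp only [trV_apply, Pi.one_apply, hterm]
  exact_mod_cast hv1

theorem norm_trV_apply_le (hm : ∀ k, 0 < m k) {v : Fin (n + 1) → ℝ} (hv : ∀ k, 0 ≤ v k)
    (hv1 : ∑ k, v k = 1) (a : Π j : Fin (n + 1), Matrix (Fin (m j)) (Fin (m j)) ℂ) :
    ‖trV v a‖ ≤ ‖a‖ := by
  have hterm (k : Fin (n + 1)) : ‖(v k : ℂ) / (m k : ℂ) * (a k).trace‖ ≤ v k * ‖a‖ := by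
    have hmk : (0 : ℝ) < m k := by exact_mod_cast hm k
    calc ‖(v k : ℂ) / (m k : ℂ) * (a k).trace‖ = v k / m k * ‖(a k).trace‖ := by
          rw [norm_mul, norm_div, Complex.norm_real, Real.norm_of_nonneg (hv k),
            Complex.norm_natCast]
      _ ≤ v k / m k * (m k * ‖a‖) := by
          refine mul_le_mul_of_nonneg_left ?_ (div_nonneg (hv k) hmk.le)
          calc ‖(a k).trace‖ ≤ m k * ‖a k‖ := by
                simpa using (a k).norm_trace_le_card_mul_l2_opNorm
            _ ≤ m k * ‖a‖ := by gcongr; exact norm_le_pi_norm a k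
      _ = v k * ‖a‖ := by field_simp
  calc ‖trV v a‖ ≤ ∑ k, ‖(v k : ℂ) / (m k : ℂ) * (a k).trace‖ := by
        rw [trV_apply]; exact norm_sum_le _ _
    _ ≤ ∑ k, v k * ‖a‖ := Finset.sum_le_sum fun k _ => hterm k
    _ = ‖a‖ := by rw [← Finset.sum_mul, hv1, one_mul]

end TracialState

section MongeKantorovich

variable {B : Type*} [NormedRing B] [NormedAlgebra ℂ B] [StarRing B]
  {L : B → ℝ≥0∞} {φ ψ : B →L[ℂ] ℂ}

theorem le_mkDist {a : B} (ha : IsSelfAdjoint a) (hL : L a ≤ 1) :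
    ENNReal.ofReal ‖φ a - ψ a‖ ≤ mkDist L φ ψ :=
  le_iSup₂ (f := fun a (_ : IsSelfAdjoint a ∧ L a ≤ 1) => ENNReal.ofReal ‖φ a - ψ a‖) a ⟨ha, hL⟩

theorem mkDist_le {r : ℝ} (h : ∀ a, IsSelfAdjoint a → L a ≤ 1 → ‖φ a - ψ a‖ ≤ r) :
    mkDist L φ ψ ≤ ENNReal.ofReal r :=
  iSup₂_le fun a ha => ENNReal.ofReal_le_ofReal (h a ha.1 ha.2)

end MongeKantorovich

section LipschitzSeminorm

variable {X : Type*} [MetricSpace X] {A : Type*} [NormedRing A] {nn : A → ℝ}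

theorem lipn_le_one_iff (hnn0 : nn 0 = 0) {a : C(X, A)} :
    lipn nn a ≤ 1 ↔ ∀ x y, nn (a x - a y) ≤ dist x y := by
  simp only [lipn, iSup_le_iff, ENNReal.ofReal_le_one, Prod.forall]
  refine forall₂_congr fun x y => ⟨fun h => ?_, fun h hxy => ?_⟩
  · rcases eq_or_ne x y with rfl | hxy
    · simp [hnn0]
    · exact (div_le_one (dist_pos.mpr hxy)).mp (h hxy)
  · exact (div_le_one (dist_pos.mpr hxy)).mpr h

variable [NormedAlgebra ℂ A]

def scalarOfReal (g : C(X, ℝ)) : C(X, A) := ⟨fun z => ((g z : ℝ) : ℂ) • 1, by fun_prop⟩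

theorem scalarOfReal_apply (g : C(X, ℝ)) (z : X) :
    scalarOfReal (A := A) g z = ((g z : ℝ) : ℂ) • 1 := rfl

theorem lipn_scalarOfReal_le_one (hnn : IsNormOn A nn) {K : NNReal} {g : C(X, ℝ)}
    (hg : LipschitzWith K g) (hK : K * nn 1 ≤ 1) : lipn nn (scalarOfReal (A := A) g) ≤ 1 := by
  refine (lipn_le_one_iff ((hnn.2.1 0).2 rfl)).2 fun x y => ?_
  have hsub : scalarOfReal (A := A) g x - scalarOfReal g y = ((g x - g y : ℝ) : ℂ) • 1 := by
    simp only [scalarOfReal_apply, Complex.ofReal_sub, sub_smul]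
  calc nn (scalarOfReal g x - scalarOfReal g y) = |g x - g y| * nn 1 := by
        rw [hsub, hnn.2.2.2]
    _ ≤ K * dist x y * nn 1 := by
        gcongr
        · exact hnn.1 1
        · exact hg.dist_le_mul x y
    _ = dist x y * (K * nn 1) := by ring
    _ ≤ dist x y := mul_le_of_le_one_right dist_nonneg hK

theorem isSelfAdjoint_scalarOfReal [StarRing A] [ContinuousStar A] [StarModule ℂ A]
    (g : C(X, ℝ)) : IsSelfAdjoint (scalarOfReal (A := A) g) := by
  ext z
  simp [scalarOfReal_apply, star_smul]

variable [CompactSpace X]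

theorem quotCXA_eq_zero_of_forall_eq_smul_one {b : C(X, A)}
    (hb : ∀ x, ∃ c : ℂ, b x = c • (1 : A)) : quotCXA b = 0 := by
  refine IsLeast.csInf_eq ⟨⟨b, hb, by simp⟩, ?_⟩
  rintro r ⟨b', -, rfl⟩
  exact norm_nonneg _

theorem LCXn_scalarOfReal_le_one (hnn : IsNormOn A nn) {K : NNReal} {g : C(X, ℝ)}
    (hg : LipschitzWith K g) (hK : K * nn 1 ≤ 1) : LCXn nn (scalarOfReal (A := A) g) ≤ 1 := by
  rw [LCXn, quotCXA_eq_zero_of_forall_eq_smul_one fun x => ⟨_, scalarOfReal_apply g x⟩,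
    ENNReal.ofReal_zero]
  exact max_le (lipn_scalarOfReal_le_one hnn hg hK) bot_le

end LipschitzSeminorm

section BiLipschitz

variable {X : Type*} [MetricSpace X] [CompactSpace X]
  {A : Type*} [NormedRing A] [NormedAlgebra ℂ A] [StarRing A] [ContinuousStar A]
  {nn : A → ℝ} (μ : A →L[ℂ] ℂ)

theorem ofReal_mul_dist_le_mkDist_LCXn [StarModule ℂ A] (hnn : IsNormOn A nn) {M : ℝ}
    (hM : 0 < M) (hM1 : M * nn 1 ≤ 1) (hμ1 : μ 1 = 1) (x y : X) :
    ENNReal.ofReal (M * dist x y) ≤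
      mkDist (LCXn nn) (μ.comp (ContinuousMap.evalCLM ℂ x))
        (μ.comp (ContinuousMap.evalCLM ℂ y)) := by
  let g : C(X, ℝ) := ⟨fun z => M * dist z y, by fun_prop⟩
  have hMK : (M.toNNReal : ℝ) = M := Real.coe_toNNReal M hM.le
  have hg : LipschitzWith M.toNNReal g := LipschitzWith.of_dist_le_mul fun z w => by
    change |M * dist z y - M * dist w y| ≤ _
    rw [hMK, ← mul_sub, abs_mul, abs_of_pos hM]
    exact mul_le_mul_of_nonneg_left (abs_dist_sub_le z w y) hM.le
  have hval : μ.comp (ContinuousMap.evalCLM ℂ x) (scalarOfReal g) -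
      μ.comp (ContinuousMap.evalCLM ℂ y) (scalarOfReal g) = ((M * dist x y : ℝ) : ℂ) := by
    simp only [ContinuousLinearMap.comp_apply, ContinuousMap.evalCLM_apply, scalarOfReal_apply,
      map_smul, hμ1, smul_eq_mul, mul_one, ← Complex.ofReal_sub]
    simp [g]
  calc ENNReal.ofReal (M * dist x y)
      = ENNReal.ofReal ‖μ.comp (ContinuousMap.evalCLM ℂ x) (scalarOfReal g) -
          μ.comp (ContinuousMap.evalCLM ℂ y) (scalarOfReal g)‖ := by
        rw [hval, Complex.norm_real, Real.norm_of_nonneg (by positivity)]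
    _ ≤ _ := le_mkDist (isSelfAdjoint_scalarOfReal g)
        (LCXn_scalarOfReal_le_one hnn hg (by rwa [hMK]))

theorem mkDist_LCXn_le_ofReal_mul_dist (hnn0 : nn 0 = 0) {N : ℝ} (hN : 0 ≤ N)
    (hnormN : ∀ a, ‖a‖ ≤ N * nn a) (hμ : ∀ a, ‖μ a‖ ≤ ‖a‖) (x y : X) :
    mkDist (LCXn nn) (μ.comp (ContinuousMap.evalCLM ℂ x)) (μ.comp (ContinuousMap.evalCLM ℂ y)) ≤
      ENNReal.ofReal (N * dist x y) := by
  refine mkDist_le fun a _ ha => ?_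
  have hlip : nn (a x - a y) ≤ dist x y :=
    (lipn_le_one_iff hnn0).1 ((le_max_left _ _).trans ha) x y
  calc ‖μ (a x) - μ (a y)‖ = ‖μ (a x - a y)‖ := by rw [map_sub]
    _ ≤ ‖a x - a y‖ := hμ _
    _ ≤ N * nn (a x - a y) := hnormN _
    _ ≤ N * dist x y := mul_le_mul_of_nonneg_left hlip hN

end BiLipschitz

/-- for the tracial state `tr_v` on `⊕_k M_{m_k}(ℂ)`, the map
`x ↦ (tr_v)_x` is bi-Lipschitz for the Monge–Kantorovich metric of `L^{(n),C(X)}`,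
with lower constant `M` and upper constant `N`. -/
theorem statement16
    (X : Type*) [MetricSpace X] [CompactSpace X]
    (n : ℕ) (m : Fin (n + 1) → ℕ) (hm : ∀ k, 0 < m k)
    (nn : (Π j : Fin (n + 1), Matrix (Fin (m j)) (Fin (m j)) ℂ) → ℝ)
    (hnn : IsNormOn _ nn) (M N : ℝ) (hM : 0 < M) (hN : 0 < N)
    (hMN : ∀ a, M * nn a ≤ ‖a‖ ∧ ‖a‖ ≤ N * nn a)
    (v : Fin (n + 1) → ℝ) (hv : ∀ k, 0 ≤ v k ∧ v k ≤ 1) (hv1 : ∑ k, v k = 1) :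
    ∀ x y : X,
      ENNReal.ofReal (M * dist x y)
          ≤ mkDist (LCXn nn) (stateAt (trV v) x) (stateAt (trV v) y) ∧
      mkDist (LCXn nn) (stateAt (trV v) x) (stateAt (trV v) y)
          ≤ ENNReal.ofReal (N * dist x y) := by
  intro x y
  have : ∀ k, Nonempty (Fin (m k)) := fun k => ⟨⟨0, hm k⟩⟩
  have hM1 : M * nn 1 ≤ 1 := by simpa using (hMN 1).1
  exact ⟨ofReal_mul_dist_le_mkDist_LCXn _ hnn hM hM1 (trV_one hm hv1) x y,
    mkDist_LCXn_le_ofReal_mul_dist _ ((hnn.2.1 0).2 rfl) hN.le (fun a => (hMN a).2)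
      (norm_trV_apply_le hm (fun k => (hv k).1) hv1) x y⟩
end
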